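/- arXiv:math/0206197 — 2 statements merged into one kernel-verified Lean document; each statement's English description precedes it below -/
import Mathlib

section
/- Every infinite (i₁,…,i_m)-cell A ⊆ G^m in a Z-group G admits a coordinate projection π_A : G^m → G^k (onto the coordinates j with i_j = 1, where k = i₁+…+i_m) whose restriction to A is a bijection from A onto a (1,…,1)-cell A' ⊆ G^k. Moreover, a (i₁,…,i_m)-cell is finite if and only if i₁ = … = i_m = 0, and in that case it is a singleton. -/
open FirstOrder FirstOrder.Language

universe u v w

namespace Presburger

/-- Function symbols of the Presburger language: `+`, `0`, `1`. -/
inductive Func : ℕ → Type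
  | add : Func 2
  | zero : Func 0
  | one : Func 0

/-- Relation symbols of the Presburger language: `≤` and congruence mod `n` for each `n > 0`. -/
inductive Rel : ℕ → Type
  | le : Rel 2
  | mod (n : ℕ) (hn : 0 < n) : Rel 2

/-- The Presburger language `⟨+, ≤, {≡ mod n}_{n>0}, 0, 1⟩`. -/
def Lang : FirstOrder.Language := ⟨Func, Rel⟩

/-- The natural interpretation of the Presburger language on a linearly ordered abelian
group with a distinguished element `1`; congruence mod `n` means the difference is an
`n`-th multiple. -/
instance instStructure (G : Type*) [AddCommGroup G] [LinearOrder G] [One G] :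
    Lang.Structure G where
  funMap {_} f v :=
    match f with
    | Func.add => v 0 + v 1
    | Func.zero => 0
    | Func.one => 1
  RelMap {_} r v :=
    match r with
    | Rel.le => v 0 ≤ v 1
    | Rel.mod k _ => ∃ z, v 0 - v 1 = (k : ℤ) • z

/-- A `Z`-group: a structure elementarily equivalent to `ℤ` in the Presburger language. -/
def IsZGroup (G : Type*) [AddCommGroup G] [LinearOrder G] [One G] : Prop :=
  ℤ ≅[Lang] G

variable {G : Type u} [AddCommGroup G] [LinearOrder G] [One G]

/-- A function `f` is linear on `X ⊆ G^m` if there are a constant `γ ∈ G`, integers `a i`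
and `0 ≤ c i < e i` such that `x i ≡ c i (mod e i)` and
`f x = ∑ i, a i * ((x i - c i) / e i) + γ` for all `x ∈ X`
(the quotient `q i = (x i - c i) / e i` being an element with `x i - c i = e i • q i`,
which is unique in a `Z`-group). -/
def IsLinear {m : ℕ} (X : Set (Fin m → G)) (f : (Fin m → G) → G) : Prop :=
  ∃ (γ : G) (a : Fin m → ℤ) (e : Fin m → ℕ) (c : Fin m → ℕ),
    (∀ i, 0 < e i ∧ c i < e i) ∧
    ∀ x ∈ X, ∃ q : Fin m → G,
      (∀ i, x i - (c i : ℤ) • (1 : G) = (e i : ℤ) • q i) ∧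
      f x = (∑ i, a i • q i) + γ

/-- Presburger cells, inductively: a `(0)`-cell is a singleton in `G`; a `(1)`-cell is an
infinite set of the form `{x | α □₁ x □₂ β, x ≡ c mod e}` (each `□` being `≤` or no
condition, encoded by an `Option` bound); a `(i₁,…,iₘ,0)`-cell is the graph of a linear
function over a `(i₁,…,iₘ)`-cell `D`; a `(i₁,…,iₘ,1)`-cell is a set
`{(x,t) | x ∈ D, α(x) □₁ t □₂ β(x), t ≡ c mod e}` over a `(i₁,…,iₘ)`-cell `D = π_m(A)`
with `α, β` linear on `D`, whose fibers have cardinality not uniformly bounded in `x ∈ D`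
by an integer. -/
inductive IsCell : {m : ℕ} → (Fin m → Bool) → Set (Fin m → G) → Prop
  | point (a : G) (A : Set (Fin 1 → G)) (hA : A = {x | x 0 = a}) :
      IsCell (fun _ => false) A
  | base (α β : Option G) (e c : ℕ) (he : 0 < e) (hc : c < e)
      (A : Set (Fin 1 → G))
      (hA : A = {x | (∀ u ∈ α, u ≤ x 0) ∧ (∀ u ∈ β, x 0 ≤ u) ∧
        ∃ z : G, x 0 - (c : ℤ) • (1 : G) = (e : ℤ) • z})
      (hinf : A.Infinite) :
      IsCell (fun _ => true) A
  | graph {m : ℕ} (ι : Fin m → Bool) (D : Set (Fin m → G)) (hD : IsCell ι D)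
      (f : (Fin m → G) → G) (hf : IsLinear D f)
      (A : Set (Fin (m + 1) → G))
      (hA : A = {z : Fin (m + 1) → G | Fin.init z ∈ D ∧ z (Fin.last m) = f (Fin.init z)}) :
      IsCell (Fin.snoc ι false) A
  | slab {m : ℕ} (ι : Fin m → Bool) (D : Set (Fin m → G)) (hD : IsCell ι D)
      (α β : Option ((Fin m → G) → G))
      (hα : ∀ f ∈ α, IsLinear D f) (hβ : ∀ f ∈ β, IsLinear D f)
      (e c : ℕ) (he : 0 < e) (hc : c < e)
      (A : Set (Fin (m + 1) → G))
      (hA : A = {z : Fin (m + 1) → G | Fin.init z ∈ D ∧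
        (∀ f ∈ α, f (Fin.init z) ≤ z (Fin.last m)) ∧
        (∀ f ∈ β, z (Fin.last m) ≤ f (Fin.init z)) ∧
        ∃ w : G, z (Fin.last m) - (c : ℤ) • (1 : G) = (e : ℤ) • w})
      (hproj : ∀ x ∈ D, ∃ t : G, Fin.snoc x t ∈ A)
      (hub : ¬ ∃ N : ℕ, ∀ x ∈ D,
        ({t : G | Fin.snoc x t ∈ A}).Finite ∧ ({t : G | Fin.snoc x t ∈ A}).ncard ≤ N) :
      IsCell (Fin.snoc ι true) A

/-- The weight (sum of the entries `i₁ + … + iₘ`) of the type of a cell. -/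
def cellWt {m : ℕ} (ι : Fin m → Bool) : ℕ := ∑ i, (ι i).toNat

section Transfer
variable {α : Type} {n : ℕ}

/-- auxiliary terms -/
def tz {α} : Lang.Term α := Term.func Func.zero ![]
def t1' {α} : Lang.Term α := Term.func Func.one ![]
def tadd {α} (s t : Lang.Term α) : Lang.Term α := Term.func Func.add ![s, t]
def tsmul {α} : ℕ → Lang.Term α → Lang.Term α
  | 0, _ => tz
  | k+1, t => tadd t (tsmul k t)
def tnum {α} (k : ℕ) : Lang.Term α := tsmul k t1'
def leF {α} {n} (s t : Lang.Term (α ⊕ Fin n)) : Lang.BoundedFormula α n :=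
  Relations.boundedFormula₂ Rel.le s t

variable {G : Type u} [AddCommGroup G] [LinearOrder G] [One G]

@[simp] lemma realize_tz (v : α → G) : (tz.realize v : G) = 0 := rfl
@[simp] lemma realize_t1' (v : α → G) : (t1'.realize v : G) = 1 := rfl
@[simp] lemma realize_tadd (v : α → G) (s t : Lang.Term α) :
    ((tadd s t).realize v : G) = s.realize v + t.realize v := rfl
@[simp] lemma realize_tsmul (v : α → G) (k : ℕ) (t : Lang.Term α) :
    ((tsmul k t).realize v : G) = (k : ℤ) • t.realize v := by
  induction k with
  | zero => simp [tsmul]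
  | succ k ih => push_cast; rw [add_smul]; simp [tsmul, ih, add_comm]
@[simp] lemma realize_tnum (v : α → G) (k : ℕ) :
    ((tnum k).realize v : G) = (k : ℤ) • (1 : G) := by simp [tnum]
@[simp] lemma realize_leF (v : α → G) (xs : Fin n → G) (s t : Lang.Term (α ⊕ Fin n)) :
    (leF s t).Realize v xs ↔ s.realize (Sum.elim v xs) ≤ t.realize (Sum.elim v xs) := by
  simp [leF, Relations.boundedFormula₂, Relations.boundedFormula, BoundedFormula.Realize]
  rfl


/-- variable picker -/
def vF {α} {n : ℕ} (i : Fin n) : Lang.Term (α ⊕ Fin n) := Term.var (Sum.inr i)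

lemma transfer (hG : IsZGroup G) (φ : Lang.Sentence) (h : (ℤ : Type) ⊨ φ) : G ⊨ φ :=
  (elementarilyEquivalent_iff.mp hG φ).mp h

lemma zg_add_le (hG : IsZGroup G) (a b c : G) (h : a ≤ b) : a + c ≤ b + c := by
  have := transfer hG ((BoundedFormula.imp (leF (vF 0) (vF 1))
    (leF (tadd (vF 0) (vF 2)) (tadd (vF 1) (vF 2)))).all.all.all
    : Lang.Sentence) (by simp [Sentence.Realize, Formula.Realize, vF, Fin.snoc])
  simp only [Sentence.Realize, Formula.Realize, BoundedFormula.realize_all,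
    BoundedFormula.realize_imp, realize_leF, Term.realize_var] at this
  have h2 := this a b c
  simp [vF, Fin.snoc] at h2
  exact h2 h

lemma zg_zero_le_one (hG : IsZGroup G) : (0 : G) ≤ 1 := by
  have := transfer hG (leF (tz : Lang.Term (Empty ⊕ Fin 0)) t1' : Lang.Sentence)
    (by simp [Sentence.Realize, Formula.Realize])
  simpa [Sentence.Realize, Formula.Realize] using this

lemma zg_one_ne_zero (hG : IsZGroup G) : (1 : G) ≠ 0 := by
  have := transfer hG ((Term.bdEqual (t1' : Lang.Term (Empty ⊕ Fin 0)) tz).not : Lang.Sentence)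
    (by simp [Sentence.Realize, Formula.Realize])
  simpa [Sentence.Realize, Formula.Realize] using this

lemma zg_discrete (hG : IsZGroup G) (z : G) (h : 0 < z) : 1 ≤ z := by
  have := transfer hG ((BoundedFormula.imp (leF tz (vF 0))
      (BoundedFormula.imp ((Term.bdEqual (vF 0) tz).not) (leF t1' (vF 0)))).all
    : Lang.Sentence) (by simp [Sentence.Realize, Formula.Realize, vF, Fin.snoc]; omega)
  simp only [Sentence.Realize, Formula.Realize, BoundedFormula.realize_all,
    BoundedFormula.realize_imp, BoundedFormula.realize_not, realize_leF,
    BoundedFormula.realize_bdEqual, Term.realize_var] at this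
  have h2 := this z
  simp [vF, Fin.snoc] at h2
  exact h2 h.le (Ne.symm h.ne)

lemma zg_torsionfree (hG : IsZGroup G) (k : ℕ) (hk : 0 < k) (x : G) (h : (k : ℤ) • x = 0) : x = 0 := by
  have := transfer hG ((BoundedFormula.imp (Term.bdEqual (tsmul k (vF 0)) tz)
      (Term.bdEqual (vF 0) tz)).all : Lang.Sentence)
    (by simp [Sentence.Realize, Formula.Realize, vF, Fin.snoc]; omega)
  simp only [Sentence.Realize, Formula.Realize, BoundedFormula.realize_all,
    BoundedFormula.realize_imp, BoundedFormula.realize_bdEqual, realize_tsmul, realize_tz,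
    Term.realize_var] at this
  have h2 := this x
  simp [vF, Fin.snoc] at h2
  exact h2 (by simpa using h)

lemma zg_dvd_of_smul (hG : IsZGroup G) (k d : ℕ) (hk : 0 < k) (w : G) (h : (d : ℤ) • (1 : G) = (k : ℤ) • w) :
    (k : ℤ) ∣ (d : ℤ) := by
  by_cases hdvd : (k : ℤ) ∣ (d : ℤ)
  · exact hdvd
  · exfalso
    have := transfer hG (((Term.bdEqual (tnum d : Lang.Term (Empty ⊕ Fin 1)) (tsmul k (vF 0))).ex).not
      : Lang.Sentence) ?_
    · simp only [Sentence.Realize, Formula.Realize, BoundedFormula.realize_not,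
        BoundedFormula.realize_ex, BoundedFormula.realize_bdEqual, realize_tnum, realize_tsmul,
        Term.realize_var] at this
      exact this ⟨w, by simpa [vF, Fin.snoc] using h⟩
    · simp only [Sentence.Realize, Formula.Realize, BoundedFormula.realize_not,
        BoundedFormula.realize_ex, BoundedFormula.realize_bdEqual, realize_tnum, realize_tsmul,
        Term.realize_var]
      rintro ⟨z, hz⟩
      simp [vF, Fin.snoc] at hz
      exact hdvd ⟨z, by omega⟩

lemma zg_lcm_smul (hG : IsZGroup G) (e e' : ℕ) (he : 0 < e) (he' : 0 < e') (g : G) (u v : G)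
    (hu : g = (e : ℤ) • u) (hv : g = (e' : ℤ) • v) :
    ∃ w : G, g = (Nat.lcm e e' : ℤ) • w := by
  have := transfer hG ((BoundedFormula.imp (Term.bdEqual (tsmul e (vF 0)) (tsmul e' (vF 1)))
      ((Term.bdEqual (tsmul e (vF 0)) (tsmul (Nat.lcm e e') (vF 2))).ex)).all.all
    : Lang.Sentence) ?_
  · simp only [Sentence.Realize, Formula.Realize, BoundedFormula.realize_all,
      BoundedFormula.realize_imp, BoundedFormula.realize_ex, BoundedFormula.realize_bdEqual,
      realize_tsmul, Term.realize_var] at this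
    have h2 := this u v
    simp [vF, Fin.snoc] at h2
    rw [hu] at hv
    obtain ⟨w, hw⟩ := h2 (by simpa [natCast_zsmul] using hv)
    refine ⟨w, ?_⟩
    rw [hu]
    simpa [natCast_zsmul] using hw
  · simp only [Sentence.Realize, Formula.Realize, BoundedFormula.realize_all,
      BoundedFormula.realize_imp, BoundedFormula.realize_ex, BoundedFormula.realize_bdEqual,
      realize_tsmul, Term.realize_var]
    intro a b hab
    simp only [vF, Fin.snoc, Term.realize_var] at hab ⊢
    simp only [natCast_zsmul, nsmul_eq_mul] at hab ⊢
    simp [Fin.snoc] at hab ⊢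
    have h1 : (e : ℤ) ∣ (e : ℤ) * a := ⟨a, rfl⟩
    have h2 : (e' : ℤ) ∣ (e : ℤ) * a := ⟨b, by simpa using hab⟩
    have h3 : ((Nat.lcm e e' : ℕ) : ℤ) ∣ (e : ℤ) * a := by
      have := Int.dvd_natAbs.mp (Int.natCast_dvd_natCast.mpr
        (Int.lcm_dvd (Int.dvd_natAbs.mpr h1) (Int.dvd_natAbs.mpr h2)))
      simpa [Int.lcm] using this
    obtain ⟨w, hw⟩ := h3
    exact ⟨w, by simpa using hw⟩

lemma zg_consistent (hG : IsZGroup G) (e c e' c' : ℕ) (he : 0 < e) (he' : 0 < e') (z u v : G)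
    (hu : z - (c : ℤ) • (1:G) = (e : ℤ) • u) (hv : z - (c' : ℤ) • (1:G) = (e' : ℤ) • v) :
    ∃ C : ℤ, C ≡ (c : ℤ) [ZMOD e] ∧ C ≡ (c' : ℤ) [ZMOD e'] := by
  by_cases hC : ∃ C : ℤ, C ≡ (c : ℤ) [ZMOD e] ∧ C ≡ (c' : ℤ) [ZMOD e']
  · exact hC
  · exfalso
    have := transfer hG ((BoundedFormula.imp
        (Term.bdEqual (vF 0) (tadd (tsmul e (vF 1)) (tnum c)))
        (BoundedFormula.imp
          (Term.bdEqual (vF 0) (tadd (tsmul e' (vF 2)) (tnum c')))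
          BoundedFormula.falsum)).all.all.all
      : Lang.Sentence) ?_
    · simp only [Sentence.Realize, Formula.Realize, BoundedFormula.realize_all,
        BoundedFormula.realize_imp, BoundedFormula.realize_bdEqual, realize_tadd, realize_tsmul,
        realize_tnum, Term.realize_var, BoundedFormula.realize_bot] at this
      have h2 := this z u v
      simp [vF, Fin.snoc] at h2
      have hz1 : z = (e:ℤ) • u + (c:ℤ) • (1:G) := by rw [← hu]; abel
      have hz2 : z = (e':ℤ) • v + (c':ℤ) • (1:G) := by rw [← hv]; abel
      exact h2 (by simpa [natCast_zsmul] using hz1) (by simpa [natCast_zsmul] using hz2)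
    · simp only [Sentence.Realize, Formula.Realize, BoundedFormula.realize_all,
        BoundedFormula.realize_imp, BoundedFormula.realize_bdEqual, realize_tadd, realize_tsmul,
        realize_tnum, Term.realize_var, BoundedFormula.realize_bot]
      intro a b b' h1 h2
      simp [vF, Fin.snoc, natCast_zsmul, nsmul_eq_mul, smul_eq_mul, mul_one] at h1 h2
      refine hC ⟨a, Int.modEq_iff_dvd.mpr ⟨-b, by rw [h1]; ring⟩,
        Int.modEq_iff_dvd.mpr ⟨-b', by rw [h2]; ring⟩⟩

end Transfer
section Arith
open scoped Classical
variable {G : Type u} [AddCommGroup G] [LinearOrder G] [One G]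

lemma zg_add_le_iff (hG : IsZGroup G) (a b c : G) : a + c ≤ b + c ↔ a ≤ b := by
  constructor
  · intro h
    have := zg_add_le hG (a + c) (b + c) (-c) h
    simpa using this
  · exact zg_add_le hG a b c

lemma zg_smul_le (hG : IsZGroup G) (k : ℕ) {a b : G} (h : a ≤ b) :
    (k : ℤ) • a ≤ (k : ℤ) • b := by
  induction k with
  | zero => simp
  | succ k ih =>
    push_cast
    rw [add_smul, add_smul, one_smul, one_smul]
    calc (k:ℤ) • a + a ≤ (k:ℤ) • b + a := zg_add_le hG _ _ a ih
    _ = a + (k:ℤ)•b := by abel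
    _ ≤ b + (k:ℤ)•b := zg_add_le hG _ _ _ h
    _ = (k:ℤ)•b + b := by abel

lemma zg_smul_nonneg (hG : IsZGroup G) (k : ℕ) {a : G} (h : 0 ≤ a) : 0 ≤ (k:ℤ) • a := by
  simpa using zg_smul_le hG k h

lemma zg_one_pos (hG : IsZGroup G) : (0:G) < 1 :=
  lt_of_le_of_ne (zg_zero_le_one hG) (Ne.symm (zg_one_ne_zero hG))

lemma zg_smul_cancel (hG : IsZGroup G) {k : ℕ} (hk : 0 < k) {x y : G}
    (h : (k:ℤ) • x = (k:ℤ) • y) : x = y := by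
  have : (k:ℤ) • (x - y) = 0 := by rw [smul_sub, h, sub_self]
  have := zg_torsionfree hG k hk _ this
  have := sub_eq_zero.mp this
  exact this

/-- The canonical quotient `(t - c)/e` in `G` (junk value if not divisible). -/
noncomputable def qdiv (e c : ℕ) (t : G) : G :=
  if h : ∃ w : G, t - (c:ℤ) • (1:G) = (e:ℤ) • w then h.choose else 0

lemma qdiv_spec (hG : IsZGroup G) {e : ℕ} (he : 0 < e) (c : ℕ) {t w : G}
    (h : t - (c:ℤ) • (1:G) = (e:ℤ) • w) : qdiv e c t = w := by
  rw [qdiv, dif_pos ⟨w, h⟩]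
  exact zg_smul_cancel hG he (((⟨w, h⟩ : ∃ w : G, t - (c:ℤ) • (1:G) = (e:ℤ) • w)).choose_spec.symm.trans h)

lemma qdiv_eq {e c : ℕ} {t : G} (h : ∃ w : G, t - (c:ℤ) • (1:G) = (e:ℤ) • w) :
    t - (c:ℤ) • (1:G) = (e:ℤ) • qdiv e c t := by
  rw [qdiv, dif_pos h]; exact h.choose_spec

/-- Canonical-form linear representation. -/
def LinRep {m : ℕ} (X : Set (Fin m → G)) (f : (Fin m → G) → G)
    (e c : Fin m → ℕ) (a : Fin m → ℤ) (γ : G) : Prop :=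
  (∀ i, 0 < e i ∧ c i < e i) ∧
  ∀ x ∈ X, (∀ i, ∃ w : G, x i - (c i : ℤ) • (1:G) = (e i : ℤ) • w) ∧
    f x = (∑ i, a i • qdiv (e i) (c i) (x i)) + γ

lemma LinRep.isLinear {m : ℕ} {X : Set (Fin m → G)} {f e c a γ}
    (h : LinRep X f e c a γ) : IsLinear X f := by
  refine ⟨γ, a, e, c, h.1, fun x hx => ⟨fun i => qdiv (e i) (c i) (x i),
    fun i => qdiv_eq ((h.2 x hx).1 i), (h.2 x hx).2⟩⟩

lemma IsLinear.linRep (hG : IsZGroup G) {m : ℕ} {X : Set (Fin m → G)} {f}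
    (h : IsLinear X f) : ∃ e c a γ, LinRep X f e c a γ := by
  obtain ⟨γ, a, e, c, hec, hx⟩ := h
  refine ⟨e, c, a, γ, hec, fun x hxX => ?_⟩
  obtain ⟨q, hq, hfx⟩ := hx x hxX
  refine ⟨fun i => ⟨q i, hq i⟩, ?_⟩
  rw [hfx]
  congr 1
  refine Finset.sum_congr rfl fun i _ => ?_
  rw [qdiv_spec hG (hec i).1 _ (hq i)]

/-- Rebase a linear representation to a refined congruence datum. -/
lemma LinRep.rebase (hG : IsZGroup G) {m : ℕ} {X : Set (Fin m → G)} {f e c a γ}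
    (h : LinRep X f e c a γ) (E C : Fin m → ℕ)
    (hEC : ∀ i, 0 < E i ∧ C i < E i)
    (hdvd : ∀ i, e i ∣ E i)
    (hcong : ∀ i, (e i : ℤ) ∣ (C i : ℤ) - (c i : ℤ))
    (hex : ∀ x ∈ X, ∀ i, ∃ w : G, x i - (C i : ℤ) • (1:G) = (E i : ℤ) • w) :
    LinRep X f E C (fun i => a i * ((E i / e i : ℕ) : ℤ))
      (γ + (∑ i, (a i * (((C i : ℤ) - (c i : ℤ)) / (e i : ℤ)))) • (1:G)) := by
  refine ⟨hEC, fun x hx => ⟨hex x hx, ?_⟩⟩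
  obtain ⟨hq, hfx⟩ := h.2 x hx
  rw [hfx]
  have key : ∀ i, qdiv (e i) (c i) (x i)
      = ((E i / e i : ℕ) : ℤ) • qdiv (E i) (C i) (x i)
        + (((C i : ℤ) - (c i : ℤ)) / (e i : ℤ)) • (1:G) := by
    intro i
    have h1 : x i - (c i : ℤ) • (1:G) = (e i : ℤ) • qdiv (e i) (c i) (x i) := qdiv_eq (hq i)
    have h2 : x i - (C i : ℤ) • (1:G) = (E i : ℤ) • qdiv (E i) (C i) (x i) := qdiv_eq (hex x hx i)
    apply zg_smul_cancel hG (h.1 i).1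
    rw [smul_add]
    obtain ⟨s, hs⟩ := hcong i
    have hde : (e i) * (E i / e i) = E i := Nat.mul_div_cancel' (hdvd i)
    have hdq : (e i : ℤ) • (((E i / e i : ℕ) : ℤ) • qdiv (E i) (C i) (x i))
        = (E i : ℤ) • qdiv (E i) (C i) (x i) := by
      rw [smul_smul]
      congr 1
      exact_mod_cast congrArg (Nat.cast (R := ℤ)) hde
    have hsq : (e i : ℤ) • ((((C i : ℤ) - (c i : ℤ)) / (e i : ℤ)) • (1:G))
        = ((C i : ℤ) - (c i : ℤ)) • (1:G) := by
      rw [smul_smul]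
      congr 1
      rw [hs]
      rw [Int.mul_ediv_cancel_left _ (by exact_mod_cast (h.1 i).1.ne' : (e i : ℤ) ≠ 0)]
    rw [hdq, hsq, ← h2, ← h1]
    rw [sub_smul]
    abel
  have key2 : ∀ i, a i • qdiv (e i) (c i) (x i)
      = (a i * ((E i / e i : ℕ) : ℤ)) • qdiv (E i) (C i) (x i)
        + (a i * (((C i : ℤ) - (c i : ℤ)) / (e i : ℤ))) • (1:G) := by
    intro i; rw [key i, smul_add, mul_smul, mul_smul]
  rw [Finset.sum_congr rfl (fun i _ => key2 i), Finset.sum_add_distrib, Finset.sum_smul]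
  abel
end Arith
section Closure
variable {G : Type u} [AddCommGroup G] [LinearOrder G] [One G]

/-- Two linear functions admit representations with a common congruence datum. -/
lemma common_rep (hG : IsZGroup G) {m : ℕ} {X : Set (Fin m → G)} {f g : (Fin m → G) → G}
    (hne : X.Nonempty) (hf : IsLinear X f) (hg : IsLinear X g) :
    ∃ E C af ag γf γg, LinRep X f E C af γf ∧ LinRep X g E C ag γg := by
  obtain ⟨e, c, a, γ, hfr⟩ := hf.linRep hG
  obtain ⟨e', c', a', γ', hgr⟩ := hg.linRep hG
  obtain ⟨x0, hx0⟩ := hne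
  set E : Fin m → ℕ := fun i => Nat.lcm (e i) (e' i) with hE
  have hEpos : ∀ i, 0 < E i := fun i =>
    Nat.pos_of_ne_zero (Nat.lcm_ne_zero (hfr.1 i).1.ne' (hgr.1 i).1.ne')
  have key : ∀ i : Fin m, ∃ C : ℕ, C < E i ∧ ((e i : ℤ) ∣ (C : ℤ) - (c i : ℤ))
      ∧ ((e' i : ℤ) ∣ (C : ℤ) - (c' i : ℤ)) := by
    intro i
    obtain ⟨u, hu⟩ := (hfr.2 x0 hx0).1 i
    obtain ⟨v, hv⟩ := (hgr.2 x0 hx0).1 i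
    obtain ⟨C0, hC1, hC2⟩ := zg_consistent hG (e i) (c i) (e' i) (c' i)
      (hfr.1 i).1 (hgr.1 i).1 (x0 i) u v hu hv
    refine ⟨(C0 % (E i : ℤ)).toNat, ?_, ?_, ?_⟩
    · have h1 : (0:ℤ) < (E i : ℤ) := by exact_mod_cast hEpos i
      have := Int.emod_lt_of_pos C0 h1
      have h2 := Int.emod_nonneg C0 h1.ne'
      omega
    · have h1 : ((E i : ℤ)) ∣ C0 - C0 % (E i : ℤ) := Int.dvd_self_sub_of_emod_eq rfl
      have h2 : (e i : ℤ) ∣ (E i : ℤ) := by exact_mod_cast Nat.dvd_lcm_left _ _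
      have h3 : (e i : ℤ) ∣ C0 - (c i : ℤ) := Int.ModEq.dvd hC1.symm
      have h4 : ((C0 % (E i : ℤ)).toNat : ℤ) = C0 % (E i : ℤ) := by
        have h5 : (0:ℤ) < (E i : ℤ) := by exact_mod_cast hEpos i
        exact Int.toNat_of_nonneg (Int.emod_nonneg C0 h5.ne')
      rw [h4]
      have := dvd_sub (h2.trans h1) h3
      simpa using dvd_sub h3 (h2.trans h1)
    · have h1 : ((E i : ℤ)) ∣ C0 - C0 % (E i : ℤ) := Int.dvd_self_sub_of_emod_eq rfl
      have h2 : (e' i : ℤ) ∣ (E i : ℤ) := by exact_mod_cast Nat.dvd_lcm_right _ _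
      have h3 : (e' i : ℤ) ∣ C0 - (c' i : ℤ) := Int.ModEq.dvd hC2.symm
      have h4 : ((C0 % (E i : ℤ)).toNat : ℤ) = C0 % (E i : ℤ) := by
        have h5 : (0:ℤ) < (E i : ℤ) := by exact_mod_cast hEpos i
        exact Int.toNat_of_nonneg (Int.emod_nonneg C0 h5.ne')
      rw [h4]
      simpa using dvd_sub h3 (h2.trans h1)
  choose C hC1 hC2 hC3 using key
  have hex : ∀ x ∈ X, ∀ i, ∃ w : G, x i - (C i : ℤ) • (1:G) = (E i : ℤ) • w := by
    intro x hx i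
    obtain ⟨u, hu⟩ := (hfr.2 x hx).1 i
    obtain ⟨v, hv⟩ := (hgr.2 x hx).1 i
    obtain ⟨s, hs⟩ := hC2 i
    obtain ⟨s', hs'⟩ := hC3 i
    have h1 : x i - (C i : ℤ) • (1:G) = (e i : ℤ) • (u - s • 1) := by
      rw [smul_sub, ← hu, smul_smul, ← hs, sub_smul]; abel
    have h2 : x i - (C i : ℤ) • (1:G) = (e' i : ℤ) • (v - s' • 1) := by
      rw [smul_sub, ← hv, smul_smul, ← hs', sub_smul]; abel
    exact zg_lcm_smul hG (e i) (e' i) (hfr.1 i).1 (hgr.1 i).1 _ _ _ h1 h2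
  have hECp : ∀ i, 0 < E i ∧ C i < E i := fun i => ⟨hEpos i, hC1 i⟩
  refine ⟨E, C, _, _, _, _,
    hfr.rebase hG E C hECp (fun i => Nat.dvd_lcm_left _ _) hC2 hex,
    hgr.rebase hG E C hECp (fun i => Nat.dvd_lcm_right _ _) hC3 hex⟩

lemma isLinear_const {m : ℕ} (X : Set (Fin m → G)) (γ : G) :
    IsLinear X (fun _ => γ) := by
  refine ⟨γ, 0, fun _ => 1, 0, fun i => ⟨one_pos, one_pos⟩, fun x hx => ⟨fun i => x i, ?_, ?_⟩⟩
  · intro i; simp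
  · simp

lemma isLinear_proj {m : ℕ} (X : Set (Fin m → G)) (j : Fin m) :
    IsLinear X (fun x => x j) := by
  refine ⟨0, fun i => if i = j then 1 else 0, fun _ => 1, 0,
    fun i => ⟨one_pos, one_pos⟩, fun x hx => ⟨fun i => x i, ?_, ?_⟩⟩
  · intro i; simp
  · simp [ite_smul]

lemma IsLinear.zsmul {m : ℕ} {X : Set (Fin m → G)} {f} (h : IsLinear X f) (k : ℤ) :
    IsLinear X (fun x => k • f x) := by
  obtain ⟨γ, a, e, c, hec, hx⟩ := h
  refine ⟨k • γ, fun i => k * a i, e, c, hec, fun x hxX => ?_⟩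
  obtain ⟨q, hq, hfx⟩ := hx x hxX
  refine ⟨q, hq, ?_⟩
  dsimp only
  rw [hfx, smul_add, Finset.smul_sum]
  congr 1
  refine Finset.sum_congr rfl fun i _ => ?_
  rw [mul_smul]

lemma IsLinear.add_const {m : ℕ} {X : Set (Fin m → G)} {f} (h : IsLinear X f) (γ₀ : G) :
    IsLinear X (fun x => f x + γ₀) := by
  obtain ⟨γ, a, e, c, hec, hx⟩ := h
  refine ⟨γ + γ₀, a, e, c, hec, fun x hxX => ?_⟩
  obtain ⟨q, hq, hfx⟩ := hx x hxX
  exact ⟨q, hq, by dsimp only; rw [hfx, add_assoc]⟩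

lemma IsLinear.add (hG : IsZGroup G) {m : ℕ} {X : Set (Fin m → G)} {f g}
    (hne : X.Nonempty) (hf : IsLinear X f) (hg : IsLinear X g) :
    IsLinear X (fun x => f x + g x) := by
  obtain ⟨E, C, af, ag, γf, γg, hfr, hgr⟩ := common_rep hG hne hf hg
  refine LinRep.isLinear (e := E) (c := C) (a := fun i => af i + ag i) (γ := γf + γg)
    ⟨hfr.1, fun x hx => ⟨(hfr.2 x hx).1, ?_⟩⟩
  dsimp only
  rw [(hfr.2 x hx).2, (hgr.2 x hx).2]
  have : (∑ i, (af i + ag i) • qdiv (E i) (C i) (x i))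
      = (∑ i, af i • qdiv (E i) (C i) (x i)) + ∑ i, ag i • qdiv (E i) (C i) (x i) := by
    rw [← Finset.sum_add_distrib]
    exact Finset.sum_congr rfl fun i _ => add_smul _ _ _
  rw [this]
  abel

lemma IsLinear.congr {m : ℕ} {X : Set (Fin m → G)} {f g : (Fin m → G) → G}
    (h : IsLinear X f) (hfg : ∀ x ∈ X, f x = g x) : IsLinear X g := by
  obtain ⟨γ, a, e, c, hec, hx⟩ := h
  exact ⟨γ, a, e, c, hec, fun x hxX => by
    obtain ⟨q, hq, hfx⟩ := hx x hxX
    exact ⟨q, hq, (hfg x hxX) ▸ hfx⟩⟩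

lemma isLinear_sum (hG : IsZGroup G) {m : ℕ} {X : Set (Fin m → G)} (hne : X.Nonempty)
    {ι : Type*} (s : Finset ι) (F : ι → (Fin m → G) → G)
    (hF : ∀ i ∈ s, IsLinear X (F i)) :
    IsLinear X (fun x => ∑ i ∈ s, F i x) := by
  classical
  revert hF
  induction s using Finset.induction with
  | empty => intro _; simpa using isLinear_const X 0
  | @insert j s' hnotmem ih =>
    intro hF
    have h1 : IsLinear X (F j) := hF j (Finset.mem_insert_self j s')
    have h2 := ih (fun i hi => hF i (Finset.mem_insert_of_mem hi))
    refine (h1.add hG hne h2).congr fun x hx => ?_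
    rw [Finset.sum_insert hnotmem]

end Closure
section MoreOrder
variable {G : Type u} [AddCommGroup G] [LinearOrder G] [One G]

lemma zg_add_le_left (hG : IsZGroup G) (a : G) {b c : G} (h : b ≤ c) : a + b ≤ a + c := by
  rw [add_comm a b, add_comm a c]; exact zg_add_le hG b c a h

lemma zg_add_lt_iff (hG : IsZGroup G) (a b c : G) : a + c < b + c ↔ a < b := by
  rw [lt_iff_le_not_ge, lt_iff_le_not_ge, zg_add_le_iff hG, zg_add_le_iff hG]

lemma zg_sub_pos (hG : IsZGroup G) {a b : G} : 0 < b - a ↔ a < b := by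
  have h := zg_add_lt_iff hG 0 (b - a) a
  simp only [zero_add, sub_add_cancel] at h
  exact h.symm

lemma zg_smul_pos_cancel (hG : IsZGroup G) {k : ℕ} {w : G} (h : 0 < (k:ℤ) • w) : 0 < w := by
  by_contra hw
  push_neg at hw
  have : (k:ℤ) • w ≤ (k:ℤ) • (0:G) := zg_smul_le hG k hw
  simp only [smul_zero] at this
  exact absurd h (not_lt.mpr this)

lemma zg_dvd_int (hG : IsZGroup G) {n : ℕ} (hn : 0 < n) {b : ℤ} {w : G}
    (h : b • (1:G) = (n:ℤ) • w) : (n:ℤ) ∣ b := by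
  rcases le_or_gt 0 b with hb | hb
  · have : ((b.toNat : ℕ) : ℤ) • (1:G) = (n:ℤ) • w := by rw [Int.toNat_of_nonneg hb]; exact h
    have h2 := zg_dvd_of_smul hG n b.toNat hn w this
    rwa [Int.toNat_of_nonneg hb] at h2
  · have : (((-b).toNat : ℕ) : ℤ) • (1:G) = (n:ℤ) • (-w) := by
      rw [Int.toNat_of_nonneg (by omega : (0:ℤ) ≤ -b), neg_smul, h, smul_neg]
    have h2 := zg_dvd_of_smul hG n (-b).toNat hn (-w) this
    rw [Int.toNat_of_nonneg (by omega : (0:ℤ) ≤ -b)] at h2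
    exact (dvd_neg).mp h2

/-- A linear function on `X` pulled back along `Fin.init` is linear. -/
lemma IsLinear.comp_init {m : ℕ} {X : Set (Fin m → G)} {Y : Set (Fin (m+1) → G)}
    {f : (Fin m → G) → G} (h : IsLinear X f) (hY : ∀ w ∈ Y, Fin.init w ∈ X) :
    IsLinear Y (fun w => f (Fin.init w)) := by
  obtain ⟨γ, a, e, c, hec, hx⟩ := h
  refine ⟨γ, Fin.snoc a 0, Fin.snoc e 1, Fin.snoc c 0, ?_, fun w hw => ?_⟩
  · intro i
    refine Fin.lastCases ?_ (fun j => ?_) i <;> simp [hec]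
  · obtain ⟨q, hq, hfx⟩ := hx (Fin.init w) (hY w hw)
    refine ⟨Fin.snoc q (w (Fin.last m)), ?_, ?_⟩
    · intro i
      refine Fin.lastCases ?_ (fun j => ?_) i
      · simp
      · simpa [Fin.snoc_castSucc, Fin.init] using hq j
    · dsimp only
      rw [hfx, Fin.sum_univ_castSucc]
      simp [Fin.snoc_castSucc]

/-- `w ↦ k • ((w last - c)/e)` is linear on a set where the last coordinate satisfies the
congruence. -/
lemma isLinear_last_qdiv (hG : IsZGroup G) {m : ℕ} {Y : Set (Fin (m+1) → G)}
    (e c : ℕ) (he : 0 < e) (hc : c < e) (k : ℤ)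
    (hY : ∀ w ∈ Y, ∃ z : G, w (Fin.last m) - (c : ℤ) • (1:G) = (e : ℤ) • z) :
    IsLinear Y (fun w => k • qdiv e c (w (Fin.last m))) := by
  refine LinRep.isLinear (e := Fin.snoc (fun _ => 1) e) (c := Fin.snoc (fun _ => 0) c)
    (a := Fin.snoc (fun _ => 0) k) (γ := 0) ⟨?_, fun w hw => ⟨?_, ?_⟩⟩
  · intro i
    refine Fin.lastCases ?_ (fun j => ?_) i <;> simp [he, hc]
  · intro i
    refine Fin.lastCases ?_ (fun j => ?_) i
    · simpa using hY w hw
    · exact ⟨w (Fin.castSucc j), by simp⟩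
  · rw [Fin.sum_univ_castSucc]
    simp [Fin.snoc_castSucc]
end MoreOrder
section DivLemma
variable {G : Type u} [AddCommGroup G] [LinearOrder G] [One G]

/-- In a set of the canonical one-variable cell form, any point can be moved one step
up while staying in the set, provided the set is nontrivial. -/
lemma exists_consecutive (hG : IsZGroup G) (ε c : ℕ) (hε : 0 < ε) (S : Set G)
    (αg βg : Option G)
    (hmem : ∀ t, t ∈ S ↔ ((∀ u ∈ αg, u ≤ t) ∧ (∀ u ∈ βg, t ≤ u) ∧
      ∃ z : G, t - (c:ℤ) • (1:G) = (ε:ℤ) • z))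
    (hnt : S.Nontrivial) : ∃ t, t ∈ S ∧ t + (ε:ℤ) • (1:G) ∈ S := by
  obtain ⟨u, hu, v, hv, hne⟩ := hnt
  have main : ∀ u v : G, u ∈ S → v ∈ S → u < v → u + (ε:ℤ) • (1:G) ∈ S := by
    intro u v hu hv hlt
    obtain ⟨hαu, hβu, zu, hzu⟩ := (hmem u).mp hu
    obtain ⟨hαv, hβv, zv, hzv⟩ := (hmem v).mp hv
    have hstep : v - u = (ε:ℤ) • (zv - zu) := by
      rw [smul_sub, ← hzu, ← hzv]; abel
    have hpos : 0 < zv - zu := by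
      apply zg_smul_pos_cancel hG (k := ε)
      rw [← hstep]
      exact (zg_sub_pos hG).mpr hlt
    have hone : (1:G) ≤ zv - zu := zg_discrete hG _ hpos
    have hle1 : u + (ε:ℤ) • (1:G) ≤ v := by
      have h2 : (ε:ℤ) • (1:G) ≤ (ε:ℤ) • (zv - zu) := zg_smul_le hG ε hone
      have h3 := zg_add_le_left hG u h2
      rw [← hstep] at h3
      simpa using h3
    have hge : u ≤ u + (ε:ℤ) • (1:G) := by
      have h0 : (0:G) ≤ (ε:ℤ) • (1:G) := zg_smul_nonneg hG ε (zg_zero_le_one hG)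
      have := zg_add_le_left hG u h0
      simpa using this
    refine (hmem _).mpr ⟨fun w hw => le_trans (hαu w hw) hge, fun w hw => le_trans hle1 (hβv w hw),
      zu + 1, ?_⟩
    rw [smul_add, ← hzu]
    abel
  rcases lt_or_gt_of_ne hne with h | h
  · exact ⟨u, hu, main u v hu hv h⟩
  · exact ⟨v, hv, main v u hv hu h⟩

/-- The division lemma: on a `(1,…,1)`-cell, a linear function all of whose values are
divisible by `n` is `n` times a linear function. -/
lemma div_lin (hG : IsZGroup G) {k : ℕ} {ι : Fin k → Bool} {A : Set (Fin k → G)}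
    (hA : IsCell ι A) :
    (∀ i, ι i = true) → ∀ (f : (Fin k → G) → G) (n : ℕ), 0 < n → IsLinear A f →
      (∀ y ∈ A, ∃ w : G, f y = (n:ℤ) • w) →
      ∃ H, IsLinear A H ∧ ∀ y ∈ A, f y = (n:ℤ) • H y := by
  induction hA with
  | point a A hA => exact fun hι => absurd (hι 0) (by simp)
  | graph ι D hD f hf A hA ih =>
    intro hι
    have := hι (Fin.last _)
    simp at this
  | base αo βo ε cc hε hcc A hA hinf =>
    intro hι f n hn hf hdiv
    subst hA
    set S : Set G := {t : G | (∀ u ∈ αo, u ≤ t) ∧ (∀ u ∈ βo, t ≤ u) ∧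
      ∃ z : G, t - (cc:ℤ) • (1:G) = (ε:ℤ) • z} with hS
    have hmem : ∀ x : Fin 1 → G, x ∈ {x : Fin 1 → G | (∀ u ∈ αo, u ≤ x 0) ∧ (∀ u ∈ βo, x 0 ≤ u) ∧
        ∃ z : G, x 0 - (cc : ℤ) • (1 : G) = (ε : ℤ) • z} ↔ x 0 ∈ S := fun x => Iff.rfl
    have hnt : S.Nontrivial := by
      obtain ⟨x, hx, y, hy, hxy⟩ := hinf.nontrivial
      refine ⟨x 0, (hmem x).mp hx, y 0, (hmem y).mp hy, fun h => hxy ?_⟩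
      funext i
      have : i = 0 := Subsingleton.elim i 0
      rw [this]; exact h
    obtain ⟨t, ht, ht'⟩ := exists_consecutive hG ε cc hε S αo βo (fun _ => Iff.rfl) hnt
    obtain ⟨e, cf, a, γ, hrep⟩ := hf.linRep hG
    have hy1A : (fun _ => t : Fin 1 → G) ∈ _ := (hmem _).mpr ht
    have hy2A : (fun _ => t + (ε:ℤ) • (1:G) : Fin 1 → G) ∈ _ := (hmem _).mpr ht'
    obtain ⟨hq1, hv1⟩ := hrep.2 _ hy1A
    obtain ⟨hq2, hv2⟩ := hrep.2 _ hy2A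
    obtain ⟨w1, hw1⟩ := hdiv _ hy1A
    obtain ⟨w2, hw2⟩ := hdiv _ hy2A
    simp only [Fin.sum_univ_one] at hv1 hv2
    have he0pos : 0 < e 0 := (hrep.1 0).1
    have hQ1 : t - (cf 0:ℤ) • (1:G) = (e 0:ℤ) • qdiv (e 0) (cf 0) t := qdiv_eq (hq1 0)
    have hQ2 : (t + (ε:ℤ) • (1:G)) - (cf 0:ℤ) • (1:G)
        = (e 0:ℤ) • qdiv (e 0) (cf 0) (t + (ε:ℤ) • (1:G)) := qdiv_eq (hq2 0)
    have hstep : (ε:ℤ) • (1:G)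
        = (e 0:ℤ) • (qdiv (e 0) (cf 0) (t + (ε:ℤ) • (1:G)) - qdiv (e 0) (cf 0) t) := by
      rw [smul_sub, ← hQ1, ← hQ2]; abel
    have hdvd1 : e 0 ∣ ε := by
      have := zg_dvd_of_smul hG (e 0) ε he0pos _ hstep
      exact_mod_cast this
    have hd : e 0 * (ε / e 0) = ε := Nat.mul_div_cancel' hdvd1
    have hde : ((e 0:ℤ) * ((ε / e 0 : ℕ):ℤ)) = (ε:ℤ) := by exact_mod_cast hd
    have hQ21 : qdiv (e 0) (cf 0) (t + (ε:ℤ) • (1:G))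
        = qdiv (e 0) (cf 0) t + ((ε / e 0 : ℕ):ℤ) • (1:G) := by
      have h1 : (e 0:ℤ) • (qdiv (e 0) (cf 0) (t + (ε:ℤ) • (1:G)) - qdiv (e 0) (cf 0) t)
          = (e 0:ℤ) • (((ε / e 0 : ℕ):ℤ) • (1:G)) := by
        rw [← hstep, smul_smul, hde]
      have := zg_smul_cancel hG he0pos h1
      rw [← this]; abel
    have hbsm : (a 0 * ((ε / e 0 : ℕ):ℤ)) • (1:G) = (n:ℤ) • (w2 - w1) := by
      rw [smul_sub, ← hw1, ← hw2, hv1, hv2, hQ21, smul_add, mul_smul]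
      abel
    have hnb : (n:ℤ) ∣ (a 0 * ((ε / e 0 : ℕ):ℤ)) := zg_dvd_int hG hn hbsm
    have hb' : (n:ℤ) * ((a 0 * ((ε / e 0 : ℕ):ℤ)) / (n:ℤ)) = a 0 * ((ε / e 0 : ℕ):ℤ) :=
      Int.mul_ediv_cancel' hnb
    obtain ⟨hta, htb, zt, hzt⟩ := ht
    have hY1 : t - (cc:ℤ) • (1:G) = (ε:ℤ) • qdiv ε cc t := qdiv_eq ⟨zt, hzt⟩
    have hcons : ((cc:ℤ) - (cf 0:ℤ)) • (1:G)
        = (e 0:ℤ) • (qdiv (e 0) (cf 0) t - ((ε / e 0 : ℕ):ℤ) • qdiv ε cc t) := by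
      rw [smul_sub, ← hQ1, smul_smul, hde, ← hY1, sub_smul]
      abel
    have hes : (e 0:ℤ) ∣ ((cc:ℤ) - (cf 0:ℤ)) := zg_dvd_int hG he0pos hcons
    obtain ⟨s, hs⟩ := hes
    have key : ∀ y ∈ {x : Fin 1 → G | (∀ u ∈ αo, u ≤ x 0) ∧ (∀ u ∈ βo, x 0 ≤ u) ∧
        ∃ z : G, x 0 - (cc : ℤ) • (1 : G) = (ε : ℤ) • z},
        f y = (a 0 * ((ε / e 0 : ℕ):ℤ)) • qdiv ε cc (y 0) + ((a 0 * s) • (1:G) + γ) := by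
      intro y hy
      obtain ⟨hqy, hvy⟩ := hrep.2 y hy
      simp only [Fin.sum_univ_one] at hvy
      obtain ⟨-, -, zy, hzy⟩ := hy
      have hYy : y 0 - (cc:ℤ) • (1:G) = (ε:ℤ) • qdiv ε cc (y 0) := qdiv_eq ⟨zy, hzy⟩
      have hQy : y 0 - (cf 0:ℤ) • (1:G) = (e 0:ℤ) • qdiv (e 0) (cf 0) (y 0) := qdiv_eq (hqy 0)
      have hQY : qdiv (e 0) (cf 0) (y 0)
          = ((ε / e 0 : ℕ):ℤ) • qdiv ε cc (y 0) + s • (1:G) := by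
        apply zg_smul_cancel hG he0pos
        rw [← hQy, smul_add, smul_smul, smul_smul, hde, ← hYy, ← hs, sub_smul]
        abel
      rw [hvy, hQY, smul_add, smul_smul, smul_smul]
      abel
    have hg0 : (a 0 * s) • (1:G) + γ
        = (n:ℤ) • (w1 - ((a 0 * ((ε / e 0 : ℕ):ℤ)) / (n:ℤ)) • qdiv ε cc t) := by
      have h1 : f (fun _ => t : Fin 1 → G) = (a 0 * ((ε / e 0 : ℕ):ℤ)) • qdiv ε cc t
          + ((a 0 * s) • (1:G) + γ) := key _ hy1A
      rw [hw1] at h1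
      rw [smul_sub, h1, smul_smul, hb']
      abel
    refine ⟨fun y => ((a 0 * ((ε / e 0 : ℕ):ℤ)) / (n:ℤ)) • qdiv ε cc (y (Fin.last 0))
      + (w1 - ((a 0 * ((ε / e 0 : ℕ):ℤ)) / (n:ℤ)) • qdiv ε cc t), ?_, ?_⟩
    · exact (isLinear_last_qdiv hG ε cc hε hcc _ (fun y hy => hy.2.2)).add_const _
    · intro y hy
      have h2 := key y hy
      rw [h2, hg0]
      rw [smul_add, smul_smul, hb']
      rfl
  | slab ι D hD αo βo hα hβ ε cc hε hcc A hA hproj hub ih =>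
    intro hι f n hn hf hdiv
    have hιD : ∀ i, ι i = true := fun i => by simpa using hι (Fin.castSucc i)
    subst hA
    set AA : Set (Fin (_ + 1) → G) := {z | Fin.init z ∈ D ∧
        (∀ fb ∈ αo, fb (Fin.init z) ≤ z (Fin.last _)) ∧
        (∀ fb ∈ βo, z (Fin.last _) ≤ fb (Fin.init z)) ∧
        ∃ w : G, z (Fin.last _) - (cc : ℤ) • (1 : G) = (ε : ℤ) • w} with hAA
    have h1 : ∃ x ∈ D, ¬(({u : G | Fin.snoc x u ∈ AA}).Finite ∧
        ({u : G | Fin.snoc x u ∈ AA}).ncard ≤ 1) := by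
      by_contra hcon
      push_neg at hcon
      exact hub ⟨1, hcon⟩
    obtain ⟨x0, hx0D, hfib⟩ := h1
    have hnt : ({u : G | Fin.snoc x0 u ∈ AA}).Nontrivial := by
      by_cases hfin : ({u : G | Fin.snoc x0 u ∈ AA}).Finite
      · have h2 : ¬ ({u : G | Fin.snoc x0 u ∈ AA}).ncard ≤ 1 := fun hle => hfib ⟨hfin, hle⟩
        exact (Set.one_lt_ncard hfin).mp (by omega)
      · exact Set.Infinite.nontrivial hfin
    have hmem : ∀ u : G, u ∈ {u : G | Fin.snoc x0 u ∈ AA} ↔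
        ((∀ v ∈ Option.map (fun fb => fb x0) αo, v ≤ u) ∧
         (∀ v ∈ Option.map (fun fb => fb x0) βo, u ≤ v) ∧
         ∃ z : G, u - (cc:ℤ) • (1:G) = (ε:ℤ) • z) := by
      intro u
      rw [Set.mem_setOf_eq, hAA, Set.mem_setOf_eq]
      cases αo <;> cases βo <;>
        simp [Fin.init_snoc, Fin.snoc_last, hx0D, Option.mem_def]
    obtain ⟨t, ht, ht'⟩ := exists_consecutive hG ε cc hε _ _ _ hmem hnt
    have hz1A : Fin.snoc x0 t ∈ AA := ht
    have hz2A : Fin.snoc x0 (t + (ε:ℤ) • (1:G)) ∈ AA := ht'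
    obtain ⟨e, cf, a, γ, hrep⟩ := hf.linRep hG
    obtain ⟨hq1, hv1⟩ := hrep.2 _ hz1A
    obtain ⟨hq2, hv2⟩ := hrep.2 _ hz2A
    obtain ⟨w1, hw1⟩ := hdiv _ hz1A
    obtain ⟨w2, hw2⟩ := hdiv _ hz2A
    simp only [Fin.sum_univ_castSucc, Fin.snoc_castSucc, Fin.snoc_last] at hv1 hv2
    have hepos : 0 < e (Fin.last _) := (hrep.1 _).1
    have hq1l := hq1 (Fin.last _)
    have hq2l := hq2 (Fin.last _)
    simp only [Fin.snoc_last] at hq1l hq2l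
    have hQ1 : t - (cf (Fin.last _):ℤ) • (1:G)
        = (e (Fin.last _):ℤ) • qdiv (e (Fin.last _)) (cf (Fin.last _)) t := qdiv_eq hq1l
    have hQ2 : (t + (ε:ℤ) • (1:G)) - (cf (Fin.last _):ℤ) • (1:G)
        = (e (Fin.last _):ℤ) • qdiv (e (Fin.last _)) (cf (Fin.last _)) (t + (ε:ℤ) • (1:G)) :=
      qdiv_eq hq2l
    have hstep : (ε:ℤ) • (1:G) = (e (Fin.last _):ℤ) •
        (qdiv (e (Fin.last _)) (cf (Fin.last _)) (t + (ε:ℤ) • (1:G))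
          - qdiv (e (Fin.last _)) (cf (Fin.last _)) t) := by
      rw [smul_sub, ← hQ1, ← hQ2]; abel
    have hdvd1 : e (Fin.last _) ∣ ε := by
      have := zg_dvd_of_smul hG (e (Fin.last _)) ε hepos _ hstep
      exact_mod_cast this
    have hd : e (Fin.last _) * (ε / e (Fin.last _)) = ε := Nat.mul_div_cancel' hdvd1
    have hde : ((e (Fin.last _):ℤ) * ((ε / e (Fin.last _) : ℕ):ℤ)) = (ε:ℤ) := by exact_mod_cast hd
    have hQ21 : qdiv (e (Fin.last _)) (cf (Fin.last _)) (t + (ε:ℤ) • (1:G))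
        = qdiv (e (Fin.last _)) (cf (Fin.last _)) t + ((ε / e (Fin.last _) : ℕ):ℤ) • (1:G) := by
      have h2 : (e (Fin.last _):ℤ) • (qdiv (e (Fin.last _)) (cf (Fin.last _)) (t + (ε:ℤ) • (1:G))
          - qdiv (e (Fin.last _)) (cf (Fin.last _)) t)
          = (e (Fin.last _):ℤ) • (((ε / e (Fin.last _) : ℕ):ℤ) • (1:G)) := by
        rw [← hstep, smul_smul, hde]
      have := zg_smul_cancel hG hepos h2
      rw [← this]; abel
    have hbsm : (a (Fin.last _) * ((ε / e (Fin.last _) : ℕ):ℤ)) • (1:G) = (n:ℤ) • (w2 - w1) := by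
      rw [smul_sub, ← hw1, ← hw2, hv1, hv2, hQ21, smul_add, mul_smul]
      abel
    have hnb : (n:ℤ) ∣ (a (Fin.last _) * ((ε / e (Fin.last _) : ℕ):ℤ)) := zg_dvd_int hG hn hbsm
    have hb' : (n:ℤ) * ((a (Fin.last _) * ((ε / e (Fin.last _) : ℕ):ℤ)) / (n:ℤ))
        = a (Fin.last _) * ((ε / e (Fin.last _) : ℕ):ℤ) := Int.mul_ediv_cancel' hnb
    obtain ⟨-, -, zt, hzt⟩ := (hmem t).mp ht
    have hY1 : t - (cc:ℤ) • (1:G) = (ε:ℤ) • qdiv ε cc t := qdiv_eq ⟨zt, hzt⟩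
    have hcons : ((cc:ℤ) - (cf (Fin.last _):ℤ)) • (1:G)
        = (e (Fin.last _):ℤ) • (qdiv (e (Fin.last _)) (cf (Fin.last _)) t
          - ((ε / e (Fin.last _) : ℕ):ℤ) • qdiv ε cc t) := by
      rw [smul_sub, ← hQ1, smul_smul, hde, ← hY1, sub_smul]
      abel
    obtain ⟨s, hs⟩ := zg_dvd_int hG hepos hcons
    have key : ∀ z ∈ AA, f z
        = ((∑ i, a (Fin.castSucc i) • qdiv (e (Fin.castSucc i)) (cf (Fin.castSucc i))
            (z (Fin.castSucc i))) + ((a (Fin.last _) * s) • (1:G) + γ))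
          + (a (Fin.last _) * ((ε / e (Fin.last _) : ℕ):ℤ)) • qdiv ε cc (z (Fin.last _)) := by
      intro z hz
      obtain ⟨hqz, hvz⟩ := hrep.2 z hz
      simp only [Fin.sum_univ_castSucc] at hvz
      obtain ⟨hzD, -, -, zz, hzz⟩ := hz
      have hYz : z (Fin.last _) - (cc:ℤ) • (1:G) = (ε:ℤ) • qdiv ε cc (z (Fin.last _)) :=
        qdiv_eq ⟨zz, hzz⟩
      have hQz : z (Fin.last _) - (cf (Fin.last _):ℤ) • (1:G)
          = (e (Fin.last _):ℤ) • qdiv (e (Fin.last _)) (cf (Fin.last _)) (z (Fin.last _)) :=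
        qdiv_eq (hqz (Fin.last _))
      have hQY : qdiv (e (Fin.last _)) (cf (Fin.last _)) (z (Fin.last _))
          = ((ε / e (Fin.last _) : ℕ):ℤ) • qdiv ε cc (z (Fin.last _)) + s • (1:G) := by
        apply zg_smul_cancel hG hepos
        rw [← hQz, smul_add, smul_smul, smul_smul, hde, ← hYz, ← hs, sub_smul]
        abel
      rw [hvz, hQY, smul_add, smul_smul, smul_smul]
      abel
    classical
    set tch : (Fin _ → G) → G := fun x => if h : ∃ u : G, Fin.snoc x u ∈ AA then h.choose else 0
      with htchd
    have htchA : ∀ x ∈ D, Fin.snoc x (tch x) ∈ AA := by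
      intro x hx
      have h := hproj x hx
      simp only [htchd]
      rw [dif_pos h]
      exact h.choose_spec
    set F : (Fin _ → G) → G := fun x => f (Fin.snoc x (tch x))
      - (a (Fin.last _) * ((ε / e (Fin.last _) : ℕ):ℤ)) • qdiv ε cc (tch x) with hFd
    have hFval : ∀ x ∈ D, F x = (∑ i, a (Fin.castSucc i) • qdiv (e (Fin.castSucc i))
        (cf (Fin.castSucc i)) (x i)) + ((a (Fin.last _) * s) • (1:G) + γ) := by
      intro x hx
      have h2 := key _ (htchA x hx)
      simp only [Fin.snoc_castSucc, Fin.snoc_last] at h2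
      simp only [hFd]
      rw [h2]
      abel
    have hFlin : IsLinear D F := by
      refine LinRep.isLinear (e := fun i => e (Fin.castSucc i)) (c := fun i => cf (Fin.castSucc i))
        (a := fun i => a (Fin.castSucc i)) (γ := (a (Fin.last _) * s) • (1:G) + γ)
        ⟨fun i => hrep.1 _, fun x hx => ⟨?_, hFval x hx⟩⟩
      intro i
      have h2 := (hrep.2 _ (htchA x hx)).1 (Fin.castSucc i)
      simpa [Fin.snoc_castSucc] using h2
    have hFdiv : ∀ x ∈ D, ∃ w, F x = (n:ℤ) • w := by
      intro x hx
      obtain ⟨w, hw⟩ := hdiv _ (htchA x hx)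
      refine ⟨w - ((a (Fin.last _) * ((ε / e (Fin.last _) : ℕ):ℤ)) / (n:ℤ))
        • qdiv ε cc (tch x), ?_⟩
      simp only [hFd]
      rw [hw, smul_sub, smul_smul, hb']
    obtain ⟨Hb, hHlin, hHeq⟩ := ih hιD F n hn hFlin hFdiv
    refine ⟨fun z => Hb (Fin.init z) + ((a (Fin.last _) * ((ε / e (Fin.last _) : ℕ):ℤ)) / (n:ℤ))
      • qdiv ε cc (z (Fin.last _)), ?_, ?_⟩
    · exact (hHlin.comp_init (fun z hz => hz.1)).add hG ⟨_, hz1A⟩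
        (isLinear_last_qdiv hG ε cc hε hcc _ (fun z hz => hz.2.2.2))
    · intro z hz
      have h2 := key z hz
      have h3 : F (Fin.init z) = (∑ i, a (Fin.castSucc i) • qdiv (e (Fin.castSucc i))
          (cf (Fin.castSucc i)) (z (Fin.castSucc i))) + ((a (Fin.last _) * s) • (1:G) + γ) :=
        hFval _ hz.1
      rw [h2, ← h3, hHeq _ hz.1]
      rw [smul_add, smul_smul, hb']

end DivLemma
section Comp
variable {G : Type u} [AddCommGroup G] [LinearOrder G] [One G]

/-- Composition of a linear function with a tuple of linear functions, on a
`(1,…,1)`-cell. -/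
lemma isLinear_comp (hG : IsZGroup G) {k m : ℕ} {ι : Fin k → Bool} {Y : Set (Fin k → G)}
    (hY : IsCell ι Y) (hι : ∀ i, ι i = true) (hne : Y.Nonempty)
    {D : Set (Fin m → G)} (g : (Fin k → G) → (Fin m → G))
    (hg : ∀ j, IsLinear Y (fun y => g y j)) (hgD : ∀ y ∈ Y, g y ∈ D)
    {f : (Fin m → G) → G} (hf : IsLinear D f) :
    IsLinear Y (fun y => f (g y)) := by
  obtain ⟨e, c, a, γ, hrep⟩ := hf.linRep hG
  have hdivall : ∀ j : Fin m, ∃ H, IsLinear Y H ∧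
      ∀ y ∈ Y, g y j - (c j:ℤ) • (1:G) = (e j:ℤ) • H y := by
    intro j
    have hlin : IsLinear Y (fun y => g y j + (-((c j:ℤ) • (1:G)))) := (hg j).add_const _
    have hdivj : ∀ y ∈ Y, ∃ w, (g y j + (-((c j:ℤ) • (1:G)))) = (e j:ℤ) • w := by
      intro y hy
      obtain ⟨w, hw⟩ := (hrep.2 _ (hgD y hy)).1 j
      exact ⟨w, by rw [← sub_eq_add_neg]; exact hw⟩
    obtain ⟨H, hH, hHeq⟩ := div_lin hG hY hι _ (e j) (hrep.1 j).1 hlin hdivj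
    exact ⟨H, hH, fun y hy => by rw [sub_eq_add_neg]; exact hHeq y hy⟩
  choose H hHlin hHeq using hdivall
  have hsum : IsLinear Y (fun y => ∑ j, a j • H j y) :=
    isLinear_sum hG hne Finset.univ (fun j => fun y => a j • H j y)
      (fun j _ => (hHlin j).zsmul (a j))
  refine (hsum.add_const γ).congr fun y hy => ?_
  obtain ⟨hq, hv⟩ := hrep.2 _ (hgD y hy)
  rw [hv]
  congr 1
  refine Finset.sum_congr rfl fun j _ => ?_
  rw [qdiv_spec hG (hrep.1 j).1 _ (hHeq j y hy)]
end Comp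
section Main
variable {G : Type u} [AddCommGroup G] [LinearOrder G] [One G]

lemma cellWt_snoc_false {m : ℕ} (ι : Fin m → Bool) :
    cellWt (Fin.snoc ι false : Fin (m+1) → Bool) = cellWt ι := by
  simp [cellWt, Fin.sum_univ_castSucc]

lemma cellWt_snoc_true {m : ℕ} (ι : Fin m → Bool) :
    cellWt (Fin.snoc ι true : Fin (m+1) → Bool) = cellWt ι + 1 := by
  simp [cellWt, Fin.sum_univ_castSucc]

lemma cellWt_zero {m : ℕ} {ι : Fin m → Bool} (h : ∀ i, ι i = false) : cellWt ι = 0 := by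
  simp only [cellWt]
  refine Finset.sum_eq_zero fun i _ => by simp [h i]

/-- The main induction. -/
lemma cell_main (hG : IsZGroup G) {m : ℕ} {ι : Fin m → Bool} {A : Set (Fin m → G)}
    (hA : IsCell ι A) :
    A.Nonempty ∧
    (A.Finite ↔ ∀ j, ι j = false) ∧
    (A.Finite → ∃ a : Fin m → G, A = {a}) ∧
    (A.Infinite → ∃ e : Fin (cellWt ι) → Fin m, StrictMono e ∧
      (∀ j : Fin m, ι j = true ↔ j ∈ Set.range e) ∧
      ∃ A' : Set (Fin (cellWt ι) → G), IsCell (fun _ => true) A' ∧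
        Set.BijOn (fun x => x ∘ e) A A' ∧
        ∃ g : (Fin (cellWt ι) → G) → (Fin m → G),
          (∀ y ∈ A', g y ∈ A ∧ g y ∘ e = y) ∧ (∀ j, IsLinear A' (fun y => g y j))) := by
  induction hA with
  | point a A hA =>
    have hA1 : A = {(fun _ => a : Fin 1 → G)} := by
      rw [hA]
      ext x
      simp only [Set.mem_setOf_eq, Set.mem_singleton_iff]
      constructor
      · intro h; funext i; rw [Subsingleton.elim i 0]; exact h
      · intro h; rw [h]
    refine ⟨⟨_, by rw [hA1]; exact rfl⟩, ?_, fun _ => ⟨_, hA1⟩, fun hinf => ?_⟩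
    · exact iff_of_true (hA1 ▸ Set.finite_singleton _) (fun j => rfl)
    · exact absurd (hA1 ▸ Set.finite_singleton _) hinf
  | base αo βo ε cc hε hcc A hA hinf =>
    refine ⟨hinf.nonempty, iff_of_false hinf (fun h => by simpa using h 0),
      fun h => absurd h hinf, fun _ => ?_⟩
    have hw : cellWt (fun _ : Fin 1 => true) = 1 := by simp [cellWt]
    rw [hw]
    refine ⟨_root_.id, strictMono_id, fun j => iff_of_true rfl ⟨j, rfl⟩,
      A, IsCell.base αo βo ε cc hε hcc A hA hinf, ?_,
      fun y => y, fun y hy => ⟨hy, rfl⟩, fun j => isLinear_proj A j⟩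
    have hid : (fun x : Fin 1 → G => x ∘ _root_.id) = _root_.id := rfl
    rw [hid]
    exact Set.bijOn_id A
  | graph ι D hD f hf A hA ih =>
    subst hA
    obtain ⟨hDne, hDfin, hDsing, hDinf⟩ := ih
    set AA : Set (Fin (_ + 1) → G) :=
      {z | Fin.init z ∈ D ∧ z (Fin.last _) = f (Fin.init z)} with hAA
    have hmemA : ∀ x ∈ D, Fin.snoc x (f x) ∈ AA := by
      intro x hx
      exact ⟨by rwa [Fin.init_snoc], by rw [Fin.snoc_last, Fin.init_snoc]⟩
    have hinitbij : Set.BijOn Fin.init AA D := by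
      refine ⟨fun z hz => hz.1, fun z hz z' hz' hzz => ?_,
        fun x hx => ⟨_, hmemA x hx, by rw [Fin.init_snoc]⟩⟩
      have h1 : z (Fin.last _) = z' (Fin.last _) := by rw [hz.2, hz'.2, hzz]
      rw [← Fin.snoc_init_self z, ← Fin.snoc_init_self z', hzz, h1]
    have hfin_iff : AA.Finite ↔ D.Finite := by
      constructor
      · intro h; exact (h.image Fin.init).subset (fun x hx => hinitbij.surjOn hx)
      · intro h
        refine (h.image (fun x => Fin.snoc x (f x))).subset ?_
        intro z hz
        exact ⟨Fin.init z, hz.1, by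
          show Fin.snoc (Fin.init z) (f (Fin.init z)) = z
          rw [← hz.2, Fin.snoc_init_self]⟩
    refine ⟨⟨_, hmemA _ hDne.choose_spec⟩, ?_, ?_, ?_⟩
    · rw [hfin_iff, hDfin]
      constructor
      · intro h j
        refine Fin.lastCases (by simp) (fun j0 => by simpa using h j0) j
      · intro h j
        simpa using h (Fin.castSucc j)
    · intro hfin
      obtain ⟨x0, hx0⟩ := hDsing (hfin_iff.mp hfin)
      refine ⟨Fin.snoc x0 (f x0), ?_⟩
      ext z
      simp only [Set.mem_singleton_iff]
      constructor
      · intro hz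
        have h1 : Fin.init z ∈ ({x0} : Set (Fin _ → G)) := hx0 ▸ hz.1
        rw [Set.mem_singleton_iff] at h1
        rw [← Fin.snoc_init_self z, h1, hz.2, h1]
      · intro hz
        rw [hz]
        exact hmemA x0 (by rw [hx0]; exact rfl)
    · intro hinf
      have hDinf2 : D.Infinite := fun h => hinf (hfin_iff.mpr h)
      obtain ⟨e, hmono, hrange, A', hA'cell, hbijD, g, hgprop, hglin⟩ := hDinf hDinf2
      rw [cellWt_snoc_false]
      refine ⟨Fin.castSucc ∘ e, ?_, ?_, A', hA'cell, ?_, ?_⟩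
      · intro i j hij
        exact Fin.castSucc_lt_castSucc_iff.mpr (hmono hij)
      · intro j
        refine Fin.lastCases ?_ (fun j0 => ?_) j
        · rw [Fin.snoc_last]
          refine iff_of_false (by simp) ?_
          rintro ⟨i, hi⟩
          exact (Fin.castSucc_lt_last (e i)).ne hi
        · rw [Fin.snoc_castSucc, hrange j0]
          constructor
          · rintro ⟨i, rfl⟩; exact ⟨i, rfl⟩
          · rintro ⟨i, hi⟩
            exact ⟨i, Fin.castSucc_injective _ hi⟩
      · have hcomp : (fun z : Fin (_+1) → G => z ∘ (Fin.castSucc ∘ e))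
            = (fun x => x ∘ e) ∘ Fin.init := rfl
        rw [hcomp]
        exact hbijD.comp hinitbij
      · refine ⟨fun y => Fin.snoc (g y) (f (g y)), fun y hy => ⟨hmemA _ (hgprop y hy).1, ?_⟩, ?_⟩
        · funext i
          have h5 := congrFun (hgprop y hy).2 i
          simpa [Fin.snoc_castSucc] using h5
        · intro j
          refine Fin.lastCases ?_ (fun j0 => ?_) j
          · have hA'ne : A'.Nonempty := ⟨_, hbijD.mapsTo hDne.choose_spec⟩
            have hcompf := isLinear_comp hG hA'cell (fun _ => rfl) hA'ne g hglin
              (fun y hy => (hgprop y hy).1) hf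
            exact hcompf.congr fun y hy => by simp [Fin.snoc_last]
          · exact (hglin j0).congr fun y hy => by simp [Fin.snoc_castSucc]
  | @slab m' ι D hD αo βo hα hβ ε cc hε hcc A hA hproj hub ih =>
    subst hA
    obtain ⟨hDne, hDfin, hDsing, hDinfF⟩ := ih
    set AA : Set (Fin (m' + 1) → G) := {z | Fin.init z ∈ D ∧
        (∀ fb ∈ αo, fb (Fin.init z) ≤ z (Fin.last _)) ∧
        (∀ fb ∈ βo, z (Fin.last _) ≤ fb (Fin.init z)) ∧
        ∃ w : G, z (Fin.last _) - (cc : ℤ) • (1 : G) = (ε : ℤ) • w} with hAA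
    have hmemAA : ∀ (x : Fin m' → G) (u : G), Fin.snoc x u ∈ AA ↔
        (x ∈ D ∧ (∀ fb ∈ αo, fb x ≤ u) ∧ (∀ fb ∈ βo, u ≤ fb x) ∧
          ∃ w : G, u - (cc : ℤ) • (1 : G) = (ε : ℤ) • w) := by
      intro x u
      rw [hAA, Set.mem_setOf_eq, Fin.init_snoc, Fin.snoc_last]
    have hAne : AA.Nonempty := by
      obtain ⟨x0, hx0⟩ := hDne
      obtain ⟨t, ht⟩ := hproj x0 hx0
      exact ⟨_, ht⟩
    have hAinf : AA.Infinite := by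
      intro hfinA
      refine hub ⟨AA.ncard, fun x hx => ?_⟩
      have hinj : Function.Injective (fun u : G => (Fin.snoc x u : Fin (m'+1) → G)) := by
        intro u v huv
        have := congrFun huv (Fin.last _)
        simpa [Fin.snoc_last] using this
      have hfin1 : ({u : G | Fin.snoc x u ∈ AA}).Finite :=
        Set.Finite.preimage hinj.injOn hfinA
      refine ⟨hfin1, ?_⟩
      have himg : (fun u : G => Fin.snoc x u) '' {u : G | Fin.snoc x u ∈ AA} ⊆ AA := by
        rintro _ ⟨u, hu, rfl⟩; exact hu
      calc ({u : G | Fin.snoc x u ∈ AA}).ncard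
          = ((fun u : G => Fin.snoc x u) '' {u : G | Fin.snoc x u ∈ AA}).ncard :=
            (Set.ncard_image_of_injective _ hinj).symm
        _ ≤ AA.ncard := Set.ncard_le_ncard himg hfinA
    refine ⟨hAne, iff_of_false hAinf (fun h => by simpa using h (Fin.last _)),
      fun h => absurd h hAinf, fun _ => ?_⟩
    by_cases hDfin2 : D.Finite
    · -- D is a singleton
      obtain ⟨x0, hDx0⟩ := hDsing hDfin2
      have hx0D : x0 ∈ D := by rw [hDx0]; exact rfl
      have hι0 : ∀ i, ι i = false := hDfin.mp hDfin2
      rw [cellWt_snoc_true, cellWt_zero hι0, Nat.zero_add]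
      have hSinf : ({u : G | Fin.snoc x0 u ∈ AA}).Infinite := by
        intro hSfin
        refine hub ⟨({u : G | Fin.snoc x0 u ∈ AA}).ncard, fun x hx => ?_⟩
        have hxx0 : x = x0 := by rw [hDx0] at hx; exact hx
        rw [hxx0]
        exact ⟨hSfin, le_rfl⟩
      set A' : Set (Fin 1 → G) := {y : Fin 1 → G |
        (∀ v ∈ Option.map (fun fb => fb x0) αo, v ≤ y 0) ∧
        (∀ v ∈ Option.map (fun fb => fb x0) βo, y 0 ≤ v) ∧
        ∃ z : G, y 0 - (cc : ℤ) • (1:G) = (ε : ℤ) • z} with hA'd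
      have hmem0 : ∀ u : G, Fin.snoc x0 u ∈ AA ↔ (fun _ => u : Fin 1 → G) ∈ A' := by
        intro u
        rw [hmemAA, hA'd, Set.mem_setOf_eq]
        cases αo <;> cases βo <;> simp [hx0D, Option.mem_def]
      have hA'inf : A'.Infinite := by
        have hinj : Function.Injective (fun u : G => (fun _ : Fin 1 => u)) :=
          fun u v h => congrFun h 0
        refine ((hSinf.image hinj.injOn).mono ?_)
        rintro _ ⟨u, hu, rfl⟩
        exact (hmem0 u).mp hu
      have hA'cell : IsCell (fun _ : Fin 1 => true) A' :=
        IsCell.base _ _ ε cc hε hcc A' hA'd hA'inf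
      have hzsplit : ∀ z : Fin (m'+1) → G, z ∈ AA → Fin.snoc x0 (z (Fin.last m')) = z := by
        intro z hz
        have h1 : Fin.init z = x0 := by
          have := hz.1
          rwa [hDx0, Set.mem_singleton_iff] at this
        rw [← h1, Fin.snoc_init_self]
      refine ⟨fun _ => Fin.last _, fun i j hij => absurd (Subsingleton.elim i j) (ne_of_lt hij),
        ?_, A', hA'cell, ⟨?_, ?_, ?_⟩, fun y => Fin.snoc x0 (y 0), fun y hy => ⟨?_, ?_⟩, ?_⟩
      · intro j
        refine Fin.lastCases ?_ (fun j0 => ?_) j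
        · exact iff_of_true (by simp) ⟨0, rfl⟩
        · rw [Fin.snoc_castSucc]
          refine iff_of_false (by simp [hι0 j0]) ?_
          rintro ⟨i, hi⟩
          exact (Fin.castSucc_lt_last j0).ne' hi
      · -- mapsTo
        intro z hz
        have h2 := (hmem0 (z (Fin.last m'))).mp (by rw [hzsplit z hz]; exact hz)
        exact h2
      · -- injOn
        intro z hz z' hz' hzz
        have h1 : z (Fin.last _) = z' (Fin.last _) := congrFun hzz 0
        rw [← hzsplit z hz, ← hzsplit z' hz', h1]
      · -- surjOn
        intro y hy
        refine ⟨Fin.snoc x0 (y 0), ?_, ?_⟩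
        · refine (hmem0 (y 0)).mpr ?_
          have : (fun _ : Fin 1 => y 0) = y := by
            funext i; rw [Subsingleton.elim i 0]
          rw [this]; exact hy
        · funext i
          show (Fin.snoc x0 (y 0) : Fin (m'+1) → G) (Fin.last m') = y i
          rw [Fin.snoc_last, Subsingleton.elim i 0]
      · -- g maps into AA
        refine (hmem0 (y 0)).mpr ?_
        have : (fun _ : Fin 1 => y 0) = y := by funext i; rw [Subsingleton.elim i 0]
        rw [this]; exact hy
      · -- comp identity
        funext i
        show (Fin.snoc x0 (y 0) : Fin (m'+1) → G) (Fin.last m') = y i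
        rw [Fin.snoc_last, Subsingleton.elim i 0]
      · -- linearity of g components
        intro j
        refine Fin.lastCases ?_ (fun j0 => ?_) j
        · exact (isLinear_proj A' 0).congr fun y hy => by simp [Fin.snoc_last]
        · exact (isLinear_const A' (x0 j0)).congr fun y hy => by simp [Fin.snoc_castSucc]
    · -- D infinite
      have hDinf2 : D.Infinite := hDfin2
      obtain ⟨e, hmono, hrange, A'D, hA'Dcell, hbijD, g, hgprop, hglin⟩ := hDinfF hDinf2
      rw [cellWt_snoc_true]
      have hA'Dne : A'D.Nonempty := ⟨_, hbijD.mapsTo hDne.choose_spec⟩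
      have hginv : ∀ x ∈ D, g (x ∘ e) = x := fun x hx =>
        hbijD.injOn (hgprop _ (hbijD.mapsTo hx)).1 hx (hgprop _ (hbijD.mapsTo hx)).2
      set e' : Fin (cellWt ι + 1) → Fin (m' + 1) :=
        Fin.snoc (Fin.castSucc ∘ e) (Fin.last m') with he'd
      have hsplit : ∀ z : Fin (m'+1) → G,
          z ∘ e' = Fin.snoc ((Fin.init z) ∘ e) (z (Fin.last m')) := by
        intro z
        funext i
        refine Fin.lastCases ?_ (fun i0 => ?_) i
        · show z (e' (Fin.last _)) = _
          rw [Fin.snoc_last, he'd, Fin.snoc_last]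
        · show z (e' (Fin.castSucc i0)) = _
          rw [Fin.snoc_castSucc, he'd, Fin.snoc_castSucc]
          rfl
      set α' : Option ((Fin (cellWt ι) → G) → G) :=
        Option.map (fun fb => fun y => fb (g y)) αo with hα'd
      set β' : Option ((Fin (cellWt ι) → G) → G) :=
        Option.map (fun fb => fun y => fb (g y)) βo with hβ'd
      set A' : Set (Fin (cellWt ι + 1) → G) := {w | Fin.init w ∈ A'D ∧
        (∀ fb ∈ α', fb (Fin.init w) ≤ w (Fin.last _)) ∧
        (∀ fb ∈ β', w (Fin.last _) ≤ fb (Fin.init w)) ∧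
        ∃ z : G, w (Fin.last _) - (cc : ℤ) • (1 : G) = (ε : ℤ) • z} with hA'd
      have hmem' : ∀ (y : Fin (cellWt ι) → G) (u : G), Fin.snoc y u ∈ A' ↔
          (y ∈ A'D ∧ (∀ fb ∈ αo, fb (g y) ≤ u) ∧ (∀ fb ∈ βo, u ≤ fb (g y)) ∧
            ∃ z : G, u - (cc : ℤ) • (1:G) = (ε : ℤ) • z) := by
        intro y u
        rw [hA'd, Set.mem_setOf_eq, Fin.init_snoc, Fin.snoc_last, hα'd, hβ'd]
        cases αo <;> cases βo <;> simp [Option.mem_def]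
      have hα' : ∀ fb ∈ α', IsLinear A'D fb := by
        intro fb hfb
        rw [hα'd] at hfb
        cases hαo : αo with
        | none => rw [hαo] at hfb; simp at hfb
        | some fb0 =>
          rw [hαo] at hfb
          simp only [Option.map_some, Option.mem_def, Option.some.injEq] at hfb
          subst hfb
          exact isLinear_comp hG hA'Dcell (fun _ => rfl) hA'Dne g hglin
            (fun y hy => (hgprop y hy).1) (hα fb0 (by rw [hαo]; rfl))
      have hβ' : ∀ fb ∈ β', IsLinear A'D fb := by
        intro fb hfb
        rw [hβ'd] at hfb
        cases hβo : βo with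
        | none => rw [hβo] at hfb; simp at hfb
        | some fb0 =>
          rw [hβo] at hfb
          simp only [Option.map_some, Option.mem_def, Option.some.injEq] at hfb
          subst hfb
          exact isLinear_comp hG hA'Dcell (fun _ => rfl) hA'Dne g hglin
            (fun y hy => (hgprop y hy).1) (hβ fb0 (by rw [hβo]; rfl))
      have hproj' : ∀ y ∈ A'D, ∃ u : G, Fin.snoc y u ∈ A' := by
        intro y hy
        obtain ⟨x, hx, hxe0⟩ := hbijD.surjOn hy
        have hxe : x ∘ e = y := hxe0
        obtain ⟨u, hu⟩ := hproj x hx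
        obtain ⟨-, hb1, hb2, hcg⟩ := (hmemAA x u).mp hu
        refine ⟨u, (hmem' y u).mpr ⟨hy, ?_, ?_, hcg⟩⟩
        · intro fb hfb
          rw [← hxe, hginv x hx]
          exact hb1 fb hfb
        · intro fb hfb
          rw [← hxe, hginv x hx]
          exact hb2 fb hfb
      have hfib_eq : ∀ x ∈ D, {u : G | Fin.snoc x u ∈ AA} = {u : G | Fin.snoc (x ∘ e) u ∈ A'} := by
        intro x hx
        ext u
        show (Fin.snoc x u ∈ AA) ↔ (Fin.snoc (x ∘ e) u ∈ A')
        rw [hmemAA, hmem', hginv x hx]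
        simp [hx, hbijD.mapsTo hx]
      have hub' : ¬ ∃ N : ℕ, ∀ y ∈ A'D, ({u : G | Fin.snoc y u ∈ A'}).Finite ∧
          ({u : G | Fin.snoc y u ∈ A'}).ncard ≤ N := by
        rintro ⟨N, hN⟩
        refine hub ⟨N, fun x hx => ?_⟩
        rw [hfib_eq x hx]
        exact hN _ (hbijD.mapsTo hx)
      have hA'cell0 : IsCell (Fin.snoc (fun _ : Fin (cellWt ι) => true) true) A' :=
        IsCell.slab _ A'D hA'Dcell α' β' hα' hβ' ε cc hε hcc A' hA'd hproj' hub'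
      have htrue : (Fin.snoc (fun _ : Fin (cellWt ι) => true) true)
          = (fun _ : Fin (cellWt ι + 1) => true) := by
        funext i
        refine Fin.lastCases (by simp) (fun j => by simp) i
      rw [htrue] at hA'cell0
      refine ⟨e', ?_, ?_, A', hA'cell0, ⟨?_, ?_, ?_⟩,
        fun w => Fin.snoc (g (Fin.init w)) (w (Fin.last _)), fun w hw => ⟨?_, ?_⟩, ?_⟩
      · -- strict mono
        intro i j hij
        rcases Fin.eq_castSucc_or_eq_last j with ⟨j0, rfl⟩ | rfl
        · rcases Fin.eq_castSucc_or_eq_last i with ⟨i0, rfl⟩ | rfl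
          · rw [he'd]
            simp only [Fin.snoc_castSucc]
            exact Fin.castSucc_lt_castSucc_iff.mpr (hmono (Fin.castSucc_lt_castSucc_iff.mp hij))
          · exact absurd hij (not_lt.mpr (Fin.castSucc_lt_last j0).le)
        · rcases Fin.eq_castSucc_or_eq_last i with ⟨i0, rfl⟩ | rfl
          · rw [he'd]
            simp only [Fin.snoc_castSucc, Fin.snoc_last]
            exact Fin.castSucc_lt_last _
          · exact absurd hij (lt_irrefl _)
      · -- range characterization
        intro j
        rcases Fin.eq_castSucc_or_eq_last j with ⟨j0, rfl⟩ | rfl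
        · rw [Fin.snoc_castSucc, hrange j0]
          constructor
          · rintro ⟨i, rfl⟩
            exact ⟨Fin.castSucc i, by simp [he'd, Fin.snoc_castSucc]⟩
          · rintro ⟨i, hi⟩
            rcases Fin.eq_castSucc_or_eq_last i with ⟨i0, rfl⟩ | rfl
            · rw [he'd, Fin.snoc_castSucc] at hi
              exact ⟨i0, Fin.castSucc_injective _ hi⟩
            · rw [he'd, Fin.snoc_last] at hi
              exact absurd hi (Fin.castSucc_lt_last j0).ne'
        · rw [Fin.snoc_last]
          exact iff_of_true rfl ⟨Fin.last _, by rw [he'd, Fin.snoc_last]⟩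
      · -- mapsTo
        intro z hz
        show z ∘ e' ∈ A'
        rw [hsplit z, hmem']
        refine ⟨hbijD.mapsTo hz.1, ?_, ?_, hz.2.2.2⟩
        · intro fb hfb
          rw [hginv _ hz.1]
          exact hz.2.1 fb hfb
        · intro fb hfb
          rw [hginv _ hz.1]
          exact hz.2.2.1 fb hfb
      · -- injOn
        intro z hz z' hz' hzz0
        have hzz : z ∘ e' = z' ∘ e' := hzz0
        rw [hsplit z, hsplit z'] at hzz
        have h1 : Fin.init z ∘ e = Fin.init z' ∘ e := by
          have := congrArg Fin.init hzz
          rwa [Fin.init_snoc, Fin.init_snoc] at this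
        have h2 : z (Fin.last _) = z' (Fin.last _) := by
          have := congrFun hzz (Fin.last _)
          rwa [Fin.snoc_last, Fin.snoc_last] at this
        have h3 : Fin.init z = Fin.init z' := hbijD.injOn hz.1 hz'.1 h1
        rw [← Fin.snoc_init_self z, ← Fin.snoc_init_self z', h2, h3]
      · -- surjOn
        intro w hw
        have hw' := (hmem' (Fin.init w) (w (Fin.last _))).mp
          (by rw [Fin.snoc_init_self]; exact hw)
        obtain ⟨hwD, hwb1, hwb2, hwc⟩ := hw'
        obtain ⟨x, hx, hxe0⟩ := hbijD.surjOn hwD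
        have hxe : x ∘ e = Fin.init w := hxe0
        have hgx : g (Fin.init w) = x := by rw [← hxe, hginv x hx]
        refine ⟨Fin.snoc x (w (Fin.last _)), ?_, ?_⟩
        · refine (hmemAA x _).mpr ⟨hx, ?_, ?_, hwc⟩
          · intro fb hfb
            rw [← hgx]
            exact hwb1 fb hfb
          · intro fb hfb
            rw [← hgx]
            exact hwb2 fb hfb
        · show Fin.snoc x (w (Fin.last (cellWt ι))) ∘ e' = w
          rw [hsplit, Fin.init_snoc, Fin.snoc_last, hxe, Fin.snoc_init_self]
      · -- g' maps into AA
        have hw' := (hmem' (Fin.init w) (w (Fin.last _))).mp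
          (by rw [Fin.snoc_init_self]; exact hw)
        obtain ⟨hwD, hwb1, hwb2, hwc⟩ := hw'
        exact (hmemAA _ _).mpr ⟨(hgprop _ hwD).1, hwb1, hwb2, hwc⟩
      · -- comp identity
        have hwD : Fin.init w ∈ A'D := hw.1
        show Fin.snoc (g (Fin.init w)) (w (Fin.last _)) ∘ e' = w
        rw [hsplit, Fin.init_snoc, Fin.snoc_last, (hgprop _ hwD).2, Fin.snoc_init_self]
      · -- linearity of g' components
        intro j
        rcases Fin.eq_castSucc_or_eq_last j with ⟨j0, rfl⟩ | rfl
        · exact ((hglin j0).comp_init (fun w hw => hw.1)).congr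
            fun w hw => by simp [Fin.snoc_castSucc]
        · exact (isLinear_proj A' (Fin.last _)).congr fun w hw => by simp [Fin.snoc_last]
end Main


/-- Every infinite `(i₁,…,iₘ)`-cell `A ⊆ G^m` in a `Z`-group admits a coordinate
projection (onto the coordinates `j` with `i_j = 1`, of which there are
`k = i₁ + … + iₘ`) mapping `A` bijectively onto a `(1,…,1)`-cell `A' ⊆ G^k`.  Moreover a
`(i₁,…,iₘ)`-cell is finite iff `i₁ = … = iₘ = 0`, in which case it is a singleton. -/
theorem cell_project (hG : IsZGroup G) {m : ℕ} (ι : Fin m → Bool) (A : Set (Fin m → G))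
    (hA : IsCell ι A) :
    (A.Infinite →
      ∃ e : Fin (cellWt ι) → Fin m, StrictMono e ∧
        (∀ j : Fin m, ι j = true ↔ j ∈ Set.range e) ∧
        ∃ A' : Set (Fin (cellWt ι) → G),
          IsCell (fun _ => true) A' ∧ Set.BijOn (fun x => x ∘ e) A A') ∧
    (A.Finite ↔ ∀ j, ι j = false) ∧
    (A.Finite → ∃ a : Fin m → G, A = {a}) := by
  obtain ⟨hne, hfin, hsing, hinf⟩ := cell_main hG hA
  refine ⟨fun h => ?_, hfin, hsing⟩
  obtain ⟨e, h1, h2, A', h3, h4, -⟩ := hinf h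
  exact ⟨e, h1, h2, A', h3, h4⟩

end Presburger
end

section
/- For any Presburger-definable set S ⊆ ℤ^m (i.e., S is definable with parameters in the structure (ℤ, +, ≤, 0, 1) with congruence relations modulo each n > 0), the preimage v̄⁻¹(S) = {(x₁,…,x_m) ∈ (ℚ_p^×)^m ∣ (v(x₁),…,v(x_m)) ∈ S} is a semialgebraic subset of ℚ_p^m, i.e., definable with parameters in the ring language (equivalently in the Macintyre language ⟨+, −, ·, 0, 1, {P_n}_{n≥1}⟩, where P_n is the set of nonzero n-th powers). -/
open FirstOrder FirstOrder.Language

universe u v w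

namespace Presburger

variable {G : Type u} [AddCommGroup G] [LinearOrder G] [One G]

attribute [local instance] FirstOrder.Ring.compatibleRingOfRing

/-! ### Auxiliary number-theoretic lemmas -/

section Aux
open MvPolynomial Set

variable {p : ℕ} [Fact p.Prime]

/-- The exponent used to define the valuation ring of `ℚ_[p]`: cubes for `p = 2`,
squares otherwise. -/
def nexp (p : ℕ) : ℕ := if p = 2 then 3 else 2

lemma nexp_pos (p : ℕ) : 0 < nexp p := by unfold nexp; split <;> norm_num
lemma one_lt_nexp (p : ℕ) : 1 < nexp p := by unfold nexp; split <;> norm_num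

lemma val_p_zpow (z : ℤ) : ((p : ℚ_[p]) ^ z).valuation = z := by
  have hp1 : (1:ℝ) < p := by exact_mod_cast (Fact.out : p.Prime).one_lt
  have hne : (p : ℚ_[p]) ^ z ≠ 0 := zpow_ne_zero _ (by exact_mod_cast (Fact.out : p.Prime).ne_zero)
  have h := Padic.norm_eq_zpow_neg_valuation hne
  rw [Padic.norm_p_zpow] at h
  have := zpow_right_injective₀ (by positivity) hp1.ne' h.symm
  omega

lemma val_pow (x : ℚ_[p]) (hx : x ≠ 0) (n : ℕ) : (x ^ n).valuation = n * x.valuation := by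
  induction n with
  | zero => simp [Padic.valuation_one]
  | succ n ih =>
    rw [pow_succ, Padic.valuation_mul (pow_ne_zero _ hx) hx, ih]
    push_cast; ring

lemma norm_int_eq_one {k : ℤ} (hk : ¬ (p:ℤ) ∣ k) : ‖(k : ℚ_[p])‖ = 1 := by
  have h1 := Padic.norm_int_le_one (p := p) k
  have h2 := (Padic.norm_intCast_lt_one_iff (p := p) (k := k)).not.2 hk
  push_neg at h2
  linarith

lemma norm_nexp : ‖((nexp p : ℕ) : ℚ_[p])‖ = 1 := by
  have hp : p.Prime := Fact.out
  have : ((nexp p : ℕ) : ℚ_[p]) = ((nexp p : ℤ) : ℚ_[p]) := by push_cast; ring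
  rw [this]
  rcases eq_or_ne p 2 with h | h
  · simp only [nexp, if_pos h]
    subst h; exact norm_int_eq_one (by decide)
  · simp only [nexp, if_neg h]
    refine norm_int_eq_one fun hd => ?_
    have h2 := Int.le_of_dvd (by norm_num) hd
    have h3 := hp.two_le
    omega

/-- The key number-theoretic fact: membership in the valuation ring of `ℚ_[p]` is an
existential (polynomial) condition. -/
lemma norm_le_one_iff_pow (a : ℚ_[p]) :
    ‖a‖ ≤ 1 ↔ ∃ y : ℚ_[p], y ^ nexp p = 1 + p * a ^ nexp p := by
  have hp : p.Prime := Fact.out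
  have hp0 : (p : ℚ_[p]) ≠ 0 := by exact_mod_cast hp.ne_zero
  have hp1 : (1:ℝ) < p := by exact_mod_cast hp.one_lt
  set n := nexp p with hn
  have hn2 : 2 ≤ n := one_lt_nexp p
  constructor
  · intro ha
    set x : ℤ_[p] := ⟨a, ha⟩ with hx
    set F : Polynomial ℤ_[p] := Polynomial.X ^ n - Polynomial.C (1 + p * x ^ n) with hF
    have hev : F.eval 1 = -(p * x ^ n) := by simp [hF]
    have hder : F.derivative.eval 1 = (n : ℤ_[p]) := by
      rw [hF, Polynomial.derivative_sub, Polynomial.derivative_C, Polynomial.derivative_X_pow,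
        sub_zero]
      simp
    have hnorm : ‖F.eval 1‖ < ‖F.derivative.eval 1‖ ^ 2 := by
      rw [hev, hder]
      have h1 : ‖(n : ℤ_[p])‖ = 1 := by
        have := norm_nexp (p := p)
        rw [PadicInt.norm_def]
        rwa [(by push_cast; ring : ((n : ℤ_[p]) : ℚ_[p]) = ((nexp p : ℕ) : ℚ_[p]))]
      rw [h1, norm_neg, one_pow]
      calc ‖(p : ℤ_[p]) * x ^ n‖ ≤ ‖(p : ℤ_[p])‖ * 1 := by
            rw [norm_mul]
            exact mul_le_mul_of_nonneg_left (by simpa using PadicInt.norm_le_one (x ^ n))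
              (norm_nonneg _)
        _ = (p : ℝ)⁻¹ := by rw [mul_one, PadicInt.norm_p]
        _ < 1 := by rw [inv_lt_one_iff₀]; right; exact hp1
    obtain ⟨z, hz, -⟩ := hensels_lemma hnorm
    have hz' : z ^ n = 1 + p * x ^ n := by
      have : z ^ n - (1 + p * x ^ n) = 0 := by simpa [hF] using hz
      exact sub_eq_zero.mp this
    refine ⟨(z : ℚ_[p]), ?_⟩
    have := congrArg (fun t : ℤ_[p] => (t : ℚ_[p])) hz'
    push_cast at this
    simpa [hx] using this
  · rintro ⟨y, hy⟩
    by_contra ha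
    push_neg at ha
    have ha0 : a ≠ 0 := by intro h; rw [h] at ha; simp at ha; linarith
    have hva : a.valuation < 0 := by
      by_contra hv
      push_neg at hv
      exact absurd ((Padic.norm_le_one_iff_val_nonneg a).mpr hv) (not_le.mpr ha)
    set t : ℚ_[p] := p * a ^ n with ht
    have ht0 : t ≠ 0 := mul_ne_zero hp0 (pow_ne_zero _ ha0)
    have hvt : t.valuation = 1 + n * a.valuation := by
      rw [ht, Padic.valuation_mul hp0 (pow_ne_zero _ ha0), Padic.valuation_p,
        val_pow a ha0]
    have hvtneg : t.valuation < 0 := by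
      rw [hvt]; nlinarith [hva, (by exact_mod_cast hn2 : (2:ℤ) ≤ (n:ℤ))]
    have hnt : (1:ℝ) < ‖t‖ := by
      rw [Padic.norm_eq_zpow_neg_valuation ht0]
      calc (1:ℝ) = (p:ℝ)^(0:ℤ) := by norm_num
        _ < (p:ℝ)^(-t.valuation) := by
            apply zpow_right_strictMono₀ hp1; omega
    have hne : ‖(1:ℚ_[p])‖ ≠ ‖t‖ := by rw [norm_one]; exact ne_of_lt hnt
    have hsum : ‖1 + t‖ = ‖t‖ := by
      rw [Padic.add_eq_max_of_ne hne, norm_one, max_eq_right (le_of_lt hnt)]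
    have hsum0 : (1:ℚ_[p]) + t ≠ 0 := by
      intro h; rw [h, norm_zero] at hsum; rw [← hsum] at hnt; linarith
    have hy0 : y ≠ 0 := by
      intro h; rw [h] at hy; rw [← hy] at hsum0; simp [zero_pow (by omega : n ≠ 0)] at hsum0
    have hvy : (y ^ n).valuation = (1 + t).valuation := by rw [hy, ht]
    have hvsum : (1 + t).valuation = t.valuation := by
      have h1 := Padic.norm_eq_zpow_neg_valuation hsum0
      have h2 := Padic.norm_eq_zpow_neg_valuation ht0
      rw [hsum, h2] at h1
      have := zpow_right_injective₀ (by positivity : (0:ℝ) < p) hp1.ne' h1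
      omega
    rw [val_pow y hy0, hvsum, hvt] at hvy
    have hdvd : (n:ℤ) ∣ 1 := ⟨y.valuation - a.valuation, by linarith⟩
    have := Int.le_of_dvd one_pos hdvd
    omega

/-! ### Definability toolbox over `ℚ_[p]` -/

variable {β : Type}

lemma def_zero (q : MvPolynomial β ℚ_[p]) :
    Set.Definable (Set.univ : Set ℚ_[p]) Language.ring {x : β → ℚ_[p] | eval x q = 0} := by
  have h := FirstOrder.Ring.mvPolynomial_zeroLocus_definable (K := ℚ_[p]) (ι := β) {q}
  have h2 := h.mono (Set.subset_univ _)
  convert h2 using 1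
  ext x
  rw [mem_zeroLocus_iff]
  constructor
  · intro hx r hr
    rw [Finset.coe_singleton, Ideal.mem_span_singleton] at hr
    obtain ⟨c, rfl⟩ := hr
    simp only [Set.mem_setOf_eq] at hx
    simp [map_mul, hx]
  · intro hx
    exact hx q (Ideal.subset_span (by simp))

lemma norm_le_norm_iff_val {x y : ℚ_[p]} (hx : x ≠ 0) (hy : y ≠ 0) :
    ‖y‖ ≤ ‖x‖ ↔ x.valuation ≤ y.valuation := by
  have hp1 : (1:ℝ) < p := by exact_mod_cast (Fact.out : p.Prime).one_lt
  rw [Padic.norm_eq_zpow_neg_valuation hx, Padic.norm_eq_zpow_neg_valuation hy,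
    (zpow_right_strictMono₀ hp1).le_iff_le]
  omega

lemma def_norm_le (q : MvPolynomial β ℚ_[p]) :
    Set.Definable (Set.univ : Set ℚ_[p]) Language.ring {x : β → ℚ_[p] | ‖eval x q‖ ≤ 1} := by
  classical
  set n := nexp p with hn
  set Q : MvPolynomial (β ⊕ Fin 1) ℚ_[p] :=
    (X (Sum.inr 0)) ^ n - (1 + C (p : ℚ_[p]) * (rename Sum.inl q) ^ n) with hQ
  have h := (def_zero Q).image_comp_sumInl_fin 1
  convert h using 1
  ext x
  simp only [Set.mem_setOf_eq, Set.mem_image]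
  constructor
  · intro hx
    obtain ⟨y, hy⟩ := (norm_le_one_iff_pow (eval x q)).mp hx
    refine ⟨Sum.elim x (fun _ => y), ?_, ?_⟩
    · simp only [Set.mem_setOf_eq, hQ, map_sub, map_add, map_mul, map_pow, map_one, eval_X, eval_C,
        eval_rename, Sum.elim_inl, Sum.elim_inr, Sum.elim_comp_inl]
      rw [hy]; ring
    · exact Sum.elim_comp_inl _ _
  · rintro ⟨z, hz, rfl⟩
    simp only [Set.mem_setOf_eq, hQ, map_sub, map_add, map_mul, map_pow, map_one, eval_X, eval_C,
      eval_rename] at hz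
    refine (norm_le_one_iff_pow _).mpr ⟨z (Sum.inr 0), ?_⟩
    rw [sub_eq_zero] at hz
    exact hz

lemma def_val_le (q r : MvPolynomial β ℚ_[p]) :
    Set.Definable (Set.univ : Set ℚ_[p]) Language.ring
      {x : β → ℚ_[p] | eval x q ≠ 0 ∧ eval x r ≠ 0 ∧
        (eval x q).valuation ≤ (eval x r).valuation} := by
  classical
  have hD := ((def_zero (β := β ⊕ Fin 1) (p := p)
      (X (Sum.inr 0) * rename Sum.inl q - rename Sum.inl r)).inter
      (def_norm_le (X (Sum.inr 0)))).image_comp_sumInl_fin 1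
  have h := ((def_zero q).compl.inter (def_zero r).compl).inter hD
  convert h using 1
  ext x
  simp only [Set.mem_setOf_eq, Set.mem_inter_iff, Set.mem_compl_iff, Set.mem_image,
    Set.mem_setOf_eq]
  constructor
  · rintro ⟨hq, hr, hle⟩
    refine ⟨⟨hq, hr⟩, Sum.elim x (fun _ => eval x r / eval x q), ⟨?_, ?_⟩, Sum.elim_comp_inl _ _⟩
    · simp only [Set.mem_setOf_eq, map_sub, map_mul, eval_X, eval_rename, Sum.elim_inr,
        Sum.elim_comp_inl]
      field_simp
      ring
    · simp only [Set.mem_setOf_eq, eval_X, Sum.elim_inr, norm_div]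
      rw [div_le_one (norm_pos_iff.mpr hq)]
      exact (norm_le_norm_iff_val hq hr).mpr hle
  · rintro ⟨⟨hq, hr⟩, z, ⟨hz1, hz2⟩, rfl⟩
    refine ⟨hq, hr, ?_⟩
    simp only [Set.mem_setOf_eq, map_sub, map_mul, eval_X, eval_rename] at hz1 hz2
    rw [sub_eq_zero] at hz1
    rw [← hz1] at hr ⊢
    have hw : z (Sum.inr 0) ≠ 0 := fun h => hr (by rw [h, zero_mul])
    rw [← norm_le_norm_iff_val hq (by exact hr)]
    calc ‖z (Sum.inr 0) * eval (z ∘ Sum.inl) q‖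
        = ‖z (Sum.inr 0)‖ * ‖eval (z ∘ Sum.inl) q‖ := norm_mul _ _
      _ ≤ 1 * ‖eval (z ∘ Sum.inl) q‖ := by
          exact mul_le_mul_of_nonneg_right hz2 (norm_nonneg _)
      _ = ‖eval (z ∘ Sum.inl) q‖ := one_mul _

lemma def_val_eq (q r : MvPolynomial β ℚ_[p]) :
    Set.Definable (Set.univ : Set ℚ_[p]) Language.ring
      {x : β → ℚ_[p] | eval x q ≠ 0 ∧ eval x r ≠ 0 ∧
        (eval x q).valuation = (eval x r).valuation} := by
  have h := (def_val_le q r).inter (def_val_le r q)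
  convert h using 1
  ext x
  simp only [Set.mem_setOf_eq, Set.mem_inter_iff]
  constructor
  · rintro ⟨hq, hr, he⟩; exact ⟨⟨hq, hr, le_of_eq he⟩, ⟨hr, hq, le_of_eq he.symm⟩⟩
  · rintro ⟨⟨hq, hr, h1⟩, ⟨_, _, h2⟩⟩; exact ⟨hq, hr, le_antisymm h1 h2⟩

lemma def_nonzero_all {γ : Type} [Fintype γ] :
    Set.Definable (Set.univ : Set ℚ_[p]) Language.ring {x : γ → ℚ_[p] | ∀ i, x i ≠ 0} := by
  have he : {x : γ → ℚ_[p] | ∀ i, x i ≠ 0} =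
      ⋂ i ∈ (Finset.univ : Finset γ), {x : γ → ℚ_[p] | eval x (X i : MvPolynomial γ ℚ_[p]) = 0}ᶜ := by
    ext x; simp
  rw [he]
  exact Set.definable_biInter_finset (fun i => (def_zero _).compl) _

end Aux



/-! ### Translation of Presburger terms into polynomials over `ℚ_[p]` -/

section Translate
open MvPolynomial Set

variable (p : ℕ) [Fact p.Prime]

/-- Translation of a Presburger term (with integer parameters) into a polynomial over `ℚ_[p]`:
addition becomes multiplication, `0` becomes `1`, `1` becomes `p`, and the parameter `c`
becomes the constant `p ^ c`. -/
noncomputable def tpoly {β : Type} :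
    (Lang[[↥(Set.univ : Set ℤ)]]).Term β → MvPolynomial β ℚ_[p]
  | .var i => X i
  | .func (Sum.inl Func.add) ts => tpoly (ts 0) * tpoly (ts 1)
  | .func (Sum.inl Func.zero) _ => 1
  | .func (Sum.inl Func.one) _ => C (p : ℚ_[p])
  | .func (l := 0) (Sum.inr c) _ => C ((p : ℚ_[p]) ^ (c.1 : ℤ))
  | .func (l := _+1) (Sum.inr c) _ => PEmpty.elim c

lemma tpoly_spec {β : Type} (t : (Lang[[↥(Set.univ : Set ℤ)]]).Term β) (x : β → ℚ_[p])
    (hx : ∀ i, x i ≠ 0) :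
    eval x (tpoly p t) ≠ 0 ∧
      (eval x (tpoly p t)).valuation = t.realize (fun i => (x i).valuation) := by
  have hp0 : (p : ℚ_[p]) ≠ 0 := by exact_mod_cast (Fact.out : p.Prime).ne_zero
  induction t with
  | var i => simpa [tpoly, Term.realize] using hx i
  | @func l f ts ih =>
    rcases f with f | c
    · cases f with
      | add =>
        obtain ⟨h0, h0v⟩ := ih 0
        obtain ⟨h1, h1v⟩ := ih 1
        rw [tpoly]
        refine ⟨by simp [map_mul, h0, h1], ?_⟩
        rw [map_mul, Padic.valuation_mul h0 h1, h0v, h1v]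
        rfl
      | zero =>
        rw [tpoly]
        exact ⟨by simp, by simp [Padic.valuation_one]; rfl⟩
      | one =>
        rw [tpoly]
        refine ⟨by simpa using hp0, ?_⟩
        rw [eval_C, Padic.valuation_p]
        rfl
    · cases l with
      | zero =>
        rw [tpoly]
        refine ⟨by simpa using zpow_ne_zero _ hp0, ?_⟩
        simp only [eval_C]
        rw [val_p_zpow]
        rfl
      | succ l => exact c.elim

end Translate


section Main
open MvPolynomial Set

variable (p : ℕ) [Fact p.Prime]

lemma velim {m k : ℕ} (x : Fin m ⊕ Fin k → ℚ_[p]) :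
    (Sum.elim (fun i => (x (Sum.inl i)).valuation) (fun j => (x (Sum.inr j)).valuation)) =
      (fun i => (x i).valuation) := by
  funext i; cases i <;> rfl

lemma main_induction (m : ℕ) {k : ℕ}
    (φ : (Lang[[↥(Set.univ : Set ℤ)]]).BoundedFormula (Fin m) k) :
    Set.Definable (Set.univ : Set ℚ_[p]) Language.ring
      {x : Fin m ⊕ Fin k → ℚ_[p] | (∀ i, x i ≠ 0) ∧
        φ.Realize (fun i => (x (Sum.inl i)).valuation)
          (fun j => (x (Sum.inr j)).valuation)} := by
  induction φ with
  | falsum =>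
    convert Set.definable_empty (A := (Set.univ : Set ℚ_[p])) (L := Language.ring) using 1
    ext x
    simp only [Set.mem_setOf_eq, Set.mem_empty_iff_false, iff_false, not_and]
    intro _ h
    exact h
  | @equal k t₁ t₂ =>
    have h := (def_nonzero_all (p := p)).inter (def_val_eq (tpoly p t₁) (tpoly p t₂))
    convert h using 1
    ext x
    simp only [Set.mem_setOf_eq, Set.mem_inter_iff]
    constructor
    · rintro ⟨hx, hφ⟩
      have he : Term.realize (Sum.elim (fun i => (x (Sum.inl i)).valuation)
          (fun j => (x (Sum.inr j)).valuation)) t₁ =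
          Term.realize (Sum.elim (fun i => (x (Sum.inl i)).valuation)
          (fun j => (x (Sum.inr j)).valuation)) t₂ := hφ
      rw [velim] at he
      obtain ⟨h1, h1v⟩ := tpoly_spec p t₁ x hx
      obtain ⟨h2, h2v⟩ := tpoly_spec p t₂ x hx
      exact ⟨hx, h1, h2, by rw [h1v, h2v, he]⟩
    · rintro ⟨hx, h1, h2, he⟩
      refine ⟨hx, ?_⟩
      show Term.realize (Sum.elim (fun i => (x (Sum.inl i)).valuation)
          (fun j => (x (Sum.inr j)).valuation)) t₁ =
        Term.realize (Sum.elim (fun i => (x (Sum.inl i)).valuation)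
          (fun j => (x (Sum.inr j)).valuation)) t₂
      rw [velim]
      obtain ⟨-, h1v⟩ := tpoly_spec p t₁ x hx
      obtain ⟨-, h2v⟩ := tpoly_spec p t₂ x hx
      rw [← h1v, ← h2v, he]
  | @rel k l R ts =>
    rcases R with r | r
    swap
    · exact r.elim
    cases r with
    | le =>
      have h := (def_nonzero_all (p := p)).inter (def_val_le (tpoly p (ts 0)) (tpoly p (ts 1)))
      convert h using 1
      ext x
      simp only [Set.mem_setOf_eq, Set.mem_inter_iff]
      constructor
      · rintro ⟨hx, hφ⟩
        have he : Term.realize (Sum.elim (fun i => (x (Sum.inl i)).valuation)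
            (fun j => (x (Sum.inr j)).valuation)) (ts 0) ≤
            Term.realize (Sum.elim (fun i => (x (Sum.inl i)).valuation)
            (fun j => (x (Sum.inr j)).valuation)) (ts 1) := hφ
        rw [velim] at he
        obtain ⟨h1, h1v⟩ := tpoly_spec p (ts 0) x hx
        obtain ⟨h2, h2v⟩ := tpoly_spec p (ts 1) x hx
        exact ⟨hx, h1, h2, by rw [h1v, h2v]; exact he⟩
      · rintro ⟨hx, h1, h2, he⟩
        refine ⟨hx, ?_⟩
        show Term.realize (Sum.elim (fun i => (x (Sum.inl i)).valuation)
            (fun j => (x (Sum.inr j)).valuation)) (ts 0) ≤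
          Term.realize (Sum.elim (fun i => (x (Sum.inl i)).valuation)
            (fun j => (x (Sum.inr j)).valuation)) (ts 1)
        rw [velim]
        obtain ⟨-, h1v⟩ := tpoly_spec p (ts 0) x hx
        obtain ⟨-, h2v⟩ := tpoly_spec p (ts 1) x hx
        rw [← h1v, ← h2v]
        exact he
    | mod n hn =>
      classical
      have hp0 : (p : ℚ_[p]) ≠ 0 := by exact_mod_cast (Fact.out : p.Prime).ne_zero
      have h := (def_nonzero_all (p := p)).inter
        ((def_val_eq (rename Sum.inl (tpoly p (ts 0)))
          (rename Sum.inl (tpoly p (ts 1)) *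
            X (Sum.inr 0) ^ n : MvPolynomial ((Fin m ⊕ Fin k) ⊕ Fin 1) ℚ_[p])).image_comp_sumInl_fin 1)
      convert h using 1
      ext x
      simp only [Set.mem_setOf_eq, Set.mem_inter_iff, Set.mem_image]
      constructor
      · rintro ⟨hx, hφ⟩
        obtain ⟨h1, h1v⟩ := tpoly_spec p (ts 0) x hx
        obtain ⟨h2, h2v⟩ := tpoly_spec p (ts 1) x hx
        obtain ⟨z, hz⟩ := hφ
        rw [smul_eq_mul, velim] at hz
        refine ⟨hx, Sum.elim x (fun _ => (p : ℚ_[p]) ^ z), ⟨?_, ?_, ?_⟩,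
          Sum.elim_comp_inl _ _⟩
        · simpa [eval_rename, Sum.elim_comp_inl] using h1
        · simp only [map_mul, map_pow, eval_X, eval_rename, Sum.elim_inr, Sum.elim_comp_inl]
          exact mul_ne_zero h2 (pow_ne_zero _ (zpow_ne_zero _ hp0))
        · simp only [map_mul, map_pow, eval_X, eval_rename, Sum.elim_inr, Sum.elim_comp_inl]
          rw [Padic.valuation_mul h2 (pow_ne_zero _ (zpow_ne_zero _ hp0)),
            val_pow _ (zpow_ne_zero _ hp0), val_p_zpow, h1v, h2v]
          linarith
      · rintro ⟨hx, w, ⟨hw1, hw2, hw3⟩, hwx⟩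
        obtain ⟨h1, h1v⟩ := tpoly_spec p (ts 0) x hx
        obtain ⟨h2, h2v⟩ := tpoly_spec p (ts 1) x hx
        refine ⟨hx, ?_⟩
        simp only [map_mul, map_pow, eval_X, eval_rename, hwx] at hw1 hw2 hw3
        have hc : w (Sum.inr 0) ≠ 0 := by
          intro h
          rw [h] at hw2
          simp [zero_pow hn.ne'] at hw2
        have hB2 : eval x (tpoly p (ts 1)) ≠ 0 := h2
        rw [Padic.valuation_mul hB2 (pow_ne_zero _ hc), val_pow _ hc] at hw3
        refine ⟨(w (Sum.inr 0)).valuation, ?_⟩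
        rw [smul_eq_mul, velim]
        change Term.realize (fun i => (x i).valuation) (ts 0) -
          Term.realize (fun i => (x i).valuation) (ts 1) = _
        rw [← h1v, ← h2v, hw3]
        ring
  | @imp k φ ψ ihφ ihψ =>
    have h := ((def_nonzero_all (p := p)).sdiff ihφ).union ihψ
    convert h using 1
    ext x
    simp only [Set.mem_setOf_eq, Set.mem_union, Set.mem_diff]
    constructor
    · rintro ⟨hx, hφψ⟩
      rw [BoundedFormula.realize_imp] at hφψ
      by_cases hφ : φ.Realize (fun i => (x (Sum.inl i)).valuation)
          (fun j => (x (Sum.inr j)).valuation)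
      · exact Or.inr ⟨hx, hφψ hφ⟩
      · exact Or.inl ⟨hx, fun hc => hφ hc.2⟩
    · rintro (⟨hx, hnφ⟩ | ⟨hx, hψ⟩)
      · exact ⟨hx, BoundedFormula.realize_imp.mpr fun hφ => absurd ⟨hx, hφ⟩ hnφ⟩
      · exact ⟨hx, BoundedFormula.realize_imp.mpr fun _ => hψ⟩
  | @all k φ ih =>
    classical
    have hp0 : (p : ℚ_[p]) ≠ 0 := by exact_mod_cast (Fact.out : p.Prime).ne_zero
    have h := (def_nonzero_all (p := p)).inter
      ((((def_nonzero_all (p := p)).sdiff ih).image_comp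
        (Sum.map id Fin.castSucc : (Fin m ⊕ Fin k) → (Fin m ⊕ Fin (k + 1)))).compl)
    convert h using 1
    ext x
    simp only [Set.mem_setOf_eq, Set.mem_inter_iff, Set.mem_compl_iff, Set.mem_image,
      Set.mem_diff, not_exists]
    constructor
    · rintro ⟨hx, hφ⟩
      rw [BoundedFormula.realize_all] at hφ
      refine ⟨hx, fun z => ?_⟩
      rintro ⟨⟨hz, hnE⟩, hzx⟩
      apply hnE
      refine ⟨hz, ?_⟩
      have e1 : (fun i => (z (Sum.inl i)).valuation) =
          (fun i => (x (Sum.inl i)).valuation) := by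
        funext i
        rw [← hzx]
        rfl
      have e2 : (fun j : Fin (k + 1) => (z (Sum.inr j)).valuation) =
          Fin.snoc (fun j => (x (Sum.inr j)).valuation)
            ((z (Sum.inr (Fin.last k))).valuation) := by
        funext j
        refine Fin.lastCases ?_ (fun i => ?_) j
        · rw [Fin.snoc_last]
        · rw [Fin.snoc_castSucc, ← hzx]
          rfl
      rw [e1, e2]
      exact hφ _
    · rintro ⟨hx, hni⟩
      refine ⟨hx, ?_⟩
      rw [BoundedFormula.realize_all]
      intro a
      set y : Fin (k + 1) → ℚ_[p] :=
        Fin.snoc (α := fun _ => ℚ_[p]) (x ∘ Sum.inr) ((p : ℚ_[p]) ^ a) with hydef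
      set z : Fin m ⊕ Fin (k + 1) → ℚ_[p] := Sum.elim (x ∘ Sum.inl) y with hzdef
      have hzx : z ∘ (Sum.map id Fin.castSucc : (Fin m ⊕ Fin k) → (Fin m ⊕ Fin (k + 1))) = x := by
        funext i
        cases i with
        | inl i => rfl
        | inr j =>
          show y (Fin.castSucc j) = x (Sum.inr j)
          rw [hydef, Fin.snoc_castSucc]
          rfl
      have hz : ∀ i, z i ≠ 0 := by
        intro i
        cases i with
        | inl i => exact hx (Sum.inl i)
        | inr j =>
          show y j ≠ 0
          refine Fin.lastCases ?_ (fun i => ?_) j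
          · rw [hydef, Fin.snoc_last]
            exact zpow_ne_zero _ hp0
          · rw [hydef, Fin.snoc_castSucc]
            exact hx (Sum.inr i)
      by_cases hre : φ.Realize (fun i => (z (Sum.inl i)).valuation)
          (fun j => (z (Sum.inr j)).valuation)
      · have e1 : (fun i => (z (Sum.inl i)).valuation) =
            (fun i => (x (Sum.inl i)).valuation) := rfl
        have e2 : (fun j : Fin (k + 1) => (z (Sum.inr j)).valuation) =
            Fin.snoc (fun j => (x (Sum.inr j)).valuation) a := by
          funext j
          refine Fin.lastCases ?_ (fun i => ?_) j
          · show (y (Fin.last k)).valuation = _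
            rw [hydef, Fin.snoc_last, Fin.snoc_last, val_p_zpow]
          · show (y (Fin.castSucc i)).valuation = _
            rw [hydef, Fin.snoc_castSucc, Fin.snoc_castSucc]
            rfl
        rw [e1, e2] at hre
        exact hre
      · exact absurd ⟨⟨hz, fun hE => hre hE.2⟩, hzx⟩ (hni z)

end Main


lemma realize_fin_zero_iff {L : Language} [L.Structure ℤ] {α : Type}
    (φ : L.BoundedFormula α 0) (v : α → ℤ) (xs : Fin 0 → ℤ) :
    φ.Realize v xs ↔ Formula.Realize φ v := by
  unfold Formula.Realize
  exact iff_of_eq (congrArg (φ.Realize v) (Subsingleton.elim _ _))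

/-- For any Presburger-definable set `S ⊆ ℤ^m`, the preimage
`v̄⁻¹(S) = {x ∈ (ℚ_p^×)^m | (v(x₁),…,v(xₘ)) ∈ S}` is definable (with parameters) in the
language of rings, i.e. it is a semialgebraic subset of `ℚ_p^m`. -/
theorem padic_preimage_of_presburger_definable (p : ℕ) [Fact p.Prime] (m : ℕ)
    (S : Set (Fin m → ℤ)) (hS : Set.Definable (Set.univ : Set ℤ) Lang S) :
    Set.Definable (Set.univ : Set ℚ_[p]) Language.ring
      {x : Fin m → ℚ_[p] | (∀ i, x i ≠ 0) ∧ (fun i => (x i).valuation) ∈ S} := by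
  obtain ⟨φ, hφ⟩ := hS
  have h := (main_induction p m (k := 0) φ).image_comp_equiv
    ((Equiv.sumEmpty (Fin m) (Fin 0)).symm)
  convert h using 1
  ext x
  simp only [Set.mem_setOf_eq, Set.mem_image]
  constructor
  · rintro ⟨hx, hxS⟩
    rw [hφ] at hxS
    refine ⟨Sum.elim x Fin.elim0, ⟨?_, ?_⟩, ?_⟩
    · intro i
      cases i with
      | inl i => exact hx i
      | inr j => exact j.elim0
    · rw [realize_fin_zero_iff]
      exact hxS
    · funext i
      rfl
  · rintro ⟨y, ⟨hy, hyR⟩, rfl⟩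
    constructor
    · intro i
      exact hy _
    · rw [hφ]
      rw [realize_fin_zero_iff] at hyR
      exact hyR

end Presburger
end
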